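/- arXiv:2110.14621 — 3 statements merged into one kernel-verified Lean document; each statement's English description precedes it below -/
import Mathlib

section
/- Fix any λ ∈ D*. For any nonanticipating online policy π, the regret satisfies Reg_T ≤ λ^⊤ E[B_τ] + E[Σ_{j=1}^n (T p_j − N_j^a(T))·(μ_j − c_j^⊤λ)_+] + E[Σ_{j=1}^n N_j^a(T)·(c_j^⊤λ − μ_j)_+], where τ is the stopping time at which some resource is first depleted (taken as T+1 if no resource is depleted by time T), B_τ is the remaining resource vector when the algorithm terminates, and N_j^a(T) is the number of accepted orders of type j during the horizon. -/
open MeasureTheory (Measure IsProbabilityMeasure)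
open ProbabilityTheory (iIndepFun IndepFun)
open scoped BigOperators

namespace FairOnline

/-- Problem data for the online resource allocation problem:
`m` resources, `n` order types, probabilities `p`, rewards `μ`,
consumption vectors `c`, average resource vector `b`. -/
structure ProblemData (m n : ℕ) where
  p : Fin n → ℝ
  μ : Fin n → ℝ
  c : Fin n → Fin m → ℝ
  b : Fin m → ℝ
  hm : 0 < m
  hn : 0 < n
  hp_pos : ∀ j, 0 < p j
  hp_sum : ∑ j, p j = 1
  hμ : ∀ j, 0 ≤ μ j ∧ μ j ≤ 1
  hc : ∀ j i, 0 ≤ c j i ∧ c j i ≤ 1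
  hb_pos : ∀ i, 0 < b i

variable {m n : ℕ}

/-- Feasibility for the LP with (possibly perturbed) data `(p', b')`:
`y ∈ [0,1]^n` and `∑_j p'_j y_j c_j ≤ b'` componentwise. -/
def Feasible (pd : ProblemData m n) (p' : Fin n → ℝ) (b' : Fin m → ℝ)
    (y : Fin n → ℝ) : Prop :=
  (∀ j, 0 ≤ y j ∧ y j ≤ 1) ∧ ∀ i, ∑ j, p' j * y j * pd.c j i ≤ b' i

/-- Objective of the LP with data `p'`. -/
def objective (pd : ProblemData m n) (p' : Fin n → ℝ) (y : Fin n → ℝ) : ℝ :=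
  ∑ j, p' j * pd.μ j * y j

/-- `y` is an optimal solution of the LP with data `(p', b')`. -/
def IsOptimal (pd : ProblemData m n) (p' : Fin n → ℝ) (b' : Fin m → ℝ)
    (y : Fin n → ℝ) : Prop :=
  Feasible pd p' b' y ∧
    ∀ y', Feasible pd p' b' y' → objective pd p' y' ≤ objective pd p' y

/-- Optimal value `OPT_D` of the deterministic LP (DLP). -/
noncomputable def OPT (pd : ProblemData m n) : ℝ :=
  sSup (objective pd pd.p '' {y | Feasible pd pd.p pd.b y})

/-- The slack variables of the LP with data `(p', b')` at the point `y`. -/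
def slack (pd : ProblemData m n) (p' : Fin n → ℝ) (b' : Fin m → ℝ)
    (y : Fin n → ℝ) : (Fin m ⊕ Fin n ⊕ Fin n) → ℝ
  | Sum.inl i => b' i - ∑ j, p' j * y j * pd.c j i
  | Sum.inr (Sum.inl j) => y j
  | Sum.inr (Sum.inr j) => 1 - y j

open Classical in
/-- Sum of logarithms of those slack variables that are not identically zero
on the optimal set. -/
noncomputable def acScore (pd : ProblemData m n) (p' : Fin n → ℝ) (b' : Fin m → ℝ)
    (y : Fin n → ℝ) : ℝ :=
  ∑ k : Fin m ⊕ Fin n ⊕ Fin n,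
    if ∃ y', IsOptimal pd p' b' y' ∧ slack pd p' b' y' k ≠ 0
    then Real.log (slack pd p' b' y k) else 0

/-- `y` is the analytic center of the optimal set of the LP with data `(p',b')`:
it is optimal and maximizes the sum of logarithms of those slack variables
not identically zero on the optimal set. -/
def IsAnalyticCenter (pd : ProblemData m n) (p' : Fin n → ℝ) (b' : Fin m → ℝ)
    (y : Fin n → ℝ) : Prop :=
  IsOptimal pd p' b' y ∧
    ∀ y', IsOptimal pd p' b' y' → acScore pd p' b' y' ≤ acScore pd p' b' y

/-- Objective of the reduced dual with data `(p', b')`: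
`b'^⊤λ + ∑_j p'_j (μ_j − c_j^⊤λ)_+`. -/
noncomputable def dualObj (pd : ProblemData m n) (p' : Fin n → ℝ) (b' : Fin m → ℝ)
    (lam : Fin m → ℝ) : ℝ :=
  ∑ i, b' i * lam i + ∑ j, p' j * max (pd.μ j - ∑ i, pd.c j i * lam i) 0

/-- `lam` is an optimal solution of the reduced dual with data `(p', b')`. -/
def IsDualOptimal (pd : ProblemData m n) (p' : Fin n → ℝ) (b' : Fin m → ℝ)
    (lam : Fin m → ℝ) : Prop :=
  (∀ i, 0 ≤ lam i) ∧
    ∀ lam', (∀ i, 0 ≤ lam' i) → dualObj pd p' b' lam ≤ dualObj pd p' b' lam'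

/-- `D*`: the optimal solution set of the reduced dual of the DLP. -/
def Dstar (pd : ProblemData m n) : Set (Fin m → ℝ) :=
  {lam | IsDualOptimal pd pd.p pd.b lam}

/-- The binding set of a solution `y` for data `(p', b')`:
resources whose constraint holds with equality. -/
def bindingSetOf (pd : ProblemData m n) (p' : Fin n → ℝ) (b' : Fin m → ℝ)
    (y : Fin n → ℝ) : Set (Fin m) :=
  {i | ∑ j, p' j * y j * pd.c j i = b' i}

/-- Dual nondegeneracy with respect to a binding set `Bset`: every dual
optimal solution is strictly positive on all binding coordinates. -/
def DualNondegenerate (pd : ProblemData m n) (Bset : Set (Fin m)) : Prop :=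
  ∀ lam ∈ Dstar pd, ∀ i ∈ Bset, 0 < lam i

/-- `max_{j∈[n], λ∈D*} |μ_j − c_j^⊤λ|`. -/
noncomputable def maxGap (pd : ProblemData m n) : ℝ :=
  sSup {x : ℝ | ∃ j : Fin n, ∃ lam ∈ Dstar pd,
    x = |pd.μ j - ∑ i, pd.c j i * lam i|}

open Classical in
/-- The vector `λ_max`. -/
noncomputable def lamMax (pd : ProblemData m n) : Fin m → ℝ := fun i =>
  if ∃ lam ∈ Dstar pd, 0 < lam i
  then sSup {x : ℝ | ∃ lam ∈ Dstar pd, x = ‖lam‖}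
  else 0

/-- The stable-region property of a constant `L` (relative to binding set `Bset`):
for every perturbed data `(b̂, p̂)` in the region, every dual optimal solution of
the perturbed problem lies in `D*`. -/
def StableRegionConst (pd : ProblemData m n) (Bset : Set (Fin m)) (L : ℝ) : Prop :=
  ∀ (bhat : Fin m → ℝ) (phat : Fin n → ℝ),
    (∀ i ∈ Bset, |bhat i - pd.b i| ≤ L) →
    (∀ i ∉ Bset, pd.b i - L ≤ bhat i) →
    (∀ j, |phat j - pd.p j| ≤ L) →
    ∀ lam, IsDualOptimal pd phat bhat lam → lam ∈ Dstar pd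

/-- The region `Ω = ∏_{i∈B}[b_i−L, b_i+L] × ∏_{i∈N}[b_i−L, ∞)`. -/
def stableSet (pd : ProblemData m n) (Bset : Set (Fin m)) (L : ℝ) :
    Set (Fin m → ℝ) :=
  {v | ∀ i, (i ∈ Bset → |v i - pd.b i| ≤ L) ∧ (i ∉ Bset → pd.b i - L ≤ v i)}

section Online

variable {Ω : Type}

/-- The empirical frequency `p̂_{j,t}` of type `j` among the first `t−1` orders. -/
noncomputable def pHat (ξ : ℕ → Ω → Fin n) (t : ℕ) (ω : Ω) (j : Fin n) : ℝ :=
  (∑ s ∈ Finset.Icc 1 (t - 1), if ξ s ω = j then (1 : ℝ) else 0) / ((t : ℝ) - 1)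

/-- Remaining resource `B_t` at the beginning of time `t`:
`B_1 = T·b`, `B_{t+1} = B_t − a_t x_t`. -/
noncomputable def Brem (pd : ProblemData m n) (T : ℕ) (ξ : ℕ → Ω → Fin n)
    (x : ℕ → Ω → ℝ) (t : ℕ) (ω : Ω) (i : Fin m) : ℝ :=
  (T : ℝ) * pd.b i - ∑ s ∈ Finset.Icc 1 (t - 1), pd.c (ξ s ω) i * x s ω

/-- Average remaining resource `b_t = B_t/(T−t+1)`. -/
noncomputable def bavg (pd : ProblemData m n) (T : ℕ) (ξ : ℕ → Ω → Fin n)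
    (x : ℕ → Ω → ℝ) (t : ℕ) (ω : Ω) (i : Fin m) : ℝ :=
  Brem pd T ξ x t ω i / ((T : ℝ) - t + 1)

/-- The first time `t ∈ [2, T]` at which some resource is depleted
(`T+1` if none is). -/
noncomputable def depleteTime (pd : ProblemData m n) (T : ℕ) (ξ : ℕ → Ω → Fin n)
    (x : ℕ → Ω → ℝ) (ω : Ω) : ℕ :=
  sInf ({t | (2 ≤ t ∧ t ≤ T) ∧ ∃ i, Brem pd T ξ x t ω i ≤ 0} ∪ {T + 1})

/-- The exit time `τ_S` of the average-resource process `b_t` out of the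
stable region. -/
noncomputable def exitTime (pd : ProblemData m n) (T : ℕ) (ξ : ℕ → Ω → Fin n)
    (x : ℕ → Ω → ℝ) (Bset : Set (Fin m)) (L : ℝ) (ω : Ω) : ℕ :=
  sInf ({t | (1 ≤ t ∧ t ≤ T) ∧ bavg pd T ξ x t ω ∉ stableSet pd Bset L} ∪ {T + 1})

/-- Number (counted with the `{0,1}`-valued decisions) of accepted orders of
type `j` during the horizon. -/
noncomputable def Naccept (pd : ProblemData m n) (T : ℕ) (ξ : ℕ → Ω → Fin n)
    (x : ℕ → Ω → ℝ) (j : Fin n) (ω : Ω) : ℝ :=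
  ∑ t ∈ Finset.Icc 1 T, if ξ t ω = j then x t ω else 0

/-- Regret: `E[T·OPT_D − ∑_t r_t x_t]`. -/
noncomputable def regretOf (pd : ProblemData m n) (T : ℕ) {mΩ : MeasurableSpace Ω}
    (P : Measure Ω) (ξ : ℕ → Ω → Fin n) (x : ℕ → Ω → ℝ) : ℝ :=
  (T : ℝ) * OPT pd - ∫ ω, (∑ t ∈ Finset.Icc 1 T, pd.μ (ξ t ω) * x t ω) ∂P

/-- History σ-algebra `H_t` generated by the orders and the policy's
randomization up to time `t`. -/
def hist [MeasurableSpace Ω] (ξ : ℕ → Ω → Fin n) (U : ℕ → Ω → ℝ) (t : ℕ) :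
    MeasurableSpace Ω :=
  ⨆ s ∈ Finset.Icc 1 t,
    MeasurableSpace.comap (fun ω => (ξ s ω, U s ω)) inferInstance

end Online

/-- A run of an arbitrary nonanticipating online policy over horizon `T`:
i.i.d. orders with law `p`, decisions `x_t ∈ {0,1}` adapted to the history
(which includes an independent uniform randomization `U`), respecting the
resource constraints. -/
structure PolicyRun (pd : ProblemData m n) (T : ℕ) where
  Ω : Type
  [mΩ : MeasurableSpace Ω]
  P : Measure Ω
  hP : IsProbabilityMeasure P
  ξ : ℕ → Ω → Fin n
  U : ℕ → Ω → ℝ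
  x : ℕ → Ω → ℝ
  hξ_meas : ∀ t, Measurable (ξ t)
  hU_meas : ∀ t, Measurable (U t)
  hiid : iIndepFun (fun t ω => (ξ t ω, U t ω)) P
  hξU_indep : ∀ t, IndepFun (ξ t) (U t) P
  hξ_law : ∀ t j, P {ω | ξ t ω = j} = ENNReal.ofReal (pd.p j)
  hU_law : ∀ t s, 0 ≤ s → s ≤ 1 → P {ω | U t ω ≤ s} = ENNReal.ofReal s
  hx01 : ∀ t ω, x t ω = 0 ∨ x t ω = 1
  hx_adapted : ∀ t, @Measurable Ω ℝ (hist ξ U t) _ (x t)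
  hconstraint : ∀ t, t ≤ T → ∀ ω i,
    ∑ s ∈ Finset.Icc 1 t, pd.c (ξ s ω) i * x s ω ≤ (T : ℝ) * pd.b i

/-- A run of the Fair Adaptive Allocation algorithm (Algorithm 2) over
horizon `T`: at each time `t ≥ 2` the algorithm solves the sampled LP with
data `(p̂_t, b_t)`, takes the analytic center `yP_t`, detects the binding set,
forms the modified right-hand side `bP_t`, re-solves to get the analytic
center `yS_t`, and accepts the arriving order of type `j` with probability
`yS_{j,t}` (via the uniform randomization `U_t`) when the resources permit. -/
structure FairRun (pd : ProblemData m n) (T : ℕ) where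
  Ω : Type
  [mΩ : MeasurableSpace Ω]
  P : Measure Ω
  hP : IsProbabilityMeasure P
  ξ : ℕ → Ω → Fin n
  U : ℕ → Ω → ℝ
  x : ℕ → Ω → ℝ
  yP : ℕ → Ω → Fin n → ℝ
  bP : ℕ → Ω → Fin m → ℝ
  yS : ℕ → Ω → Fin n → ℝ
  hξ_meas : ∀ t, Measurable (ξ t)
  hU_meas : ∀ t, Measurable (U t)
  hx_meas : ∀ t, Measurable (x t)
  hyS_meas : ∀ t, Measurable (yS t)
  hiid : iIndepFun (fun t ω => (ξ t ω, U t ω)) P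
  hξU_indep : ∀ t, IndepFun (ξ t) (U t) P
  hξ_law : ∀ t j, P {ω | ξ t ω = j} = ENNReal.ofReal (pd.p j)
  hU_law : ∀ t s, 0 ≤ s → s ≤ 1 → P {ω | U t ω ≤ s} = ENNReal.ofReal s
  hx1 : ∀ ω, x 1 ω = 1
  hyP_ac : ∀ t, 2 ≤ t → t ≤ T → ∀ ω,
    IsAnalyticCenter pd (pHat ξ t ω) (bavg pd T ξ x t ω) (yP t ω)
  hbP : ∀ t, 2 ≤ t → t ≤ T → ∀ ω i,
    bP t ω i =
      if ∑ j, pHat ξ t ω j * pd.c j i * yP t ω j = bavg pd T ξ x t ω i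
      then bavg pd T ξ x t ω i else pd.b i
  hbP1 : ∀ ω i, bP 1 ω i = pd.b i
  hyS_ac : ∀ t, 2 ≤ t → t ≤ T → ∀ ω,
    IsAnalyticCenter pd (pHat ξ t ω) (bP t ω) (yS t ω)
  hyS_range : ∀ t ω j, 0 ≤ yS t ω j ∧ yS t ω j ≤ 1
  hx_rule : ∀ t, 2 ≤ t → t ≤ T → ∀ ω,
    x t ω =
      if (∀ i, pd.c (ξ t ω) i ≤ Brem pd T ξ x t ω i) ∧ U t ω ≤ yS t ω (ξ t ω)
      then 1 else 0

/-- The regret of a run (of the fair algorithm). -/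
noncomputable def FairRun.regret {pd : ProblemData m n} {T : ℕ}
    (R : FairRun pd T) : ℝ :=
  regretOf pd T R.P R.ξ R.x

/-- The regret of a run (of a general policy). -/
noncomputable def PolicyRun.regret {pd : ProblemData m n} {T : ℕ}
    (R : PolicyRun pd T) : ℝ :=
  regretOf pd T R.P R.ξ R.x



section AuxProof

open MeasureTheory

variable {Ω : Type}

private lemma nat_sInf_eq_iff' {S : Set ℕ} (hS : S.Nonempty) {t : ℕ} :
    sInf S = t ↔ t ∈ S ∧ ∀ s, s < t → s ∉ S := by
  constructor
  · rintro rfl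
    exact ⟨Nat.sInf_mem hS, fun s hs => Nat.notMem_of_lt_sInf hs⟩
  · rintro ⟨ht, hlt⟩
    rcases lt_or_eq_of_le (Nat.sInf_le ht) with h | h
    · exact absurd (Nat.sInf_mem hS) (hlt _ h)
    · exact h

private lemma depleteTime_mem_set (pd : ProblemData m n) (T : ℕ)
    (ξ : ℕ → Ω → Fin n) (x : ℕ → Ω → ℝ) (ω : Ω) :
    depleteTime pd T ξ x ω ∈
      ({t | (2 ≤ t ∧ t ≤ T) ∧ ∃ i, Brem pd T ξ x t ω i ≤ 0} ∪ {T + 1} : Set ℕ) :=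
  Nat.sInf_mem ⟨T + 1, Set.mem_union_right _ rfl⟩

private lemma depleteTime_le (pd : ProblemData m n) (T : ℕ)
    (ξ : ℕ → Ω → Fin n) (x : ℕ → Ω → ℝ) (ω : Ω) :
    depleteTime pd T ξ x ω ≤ T + 1 :=
  Nat.sInf_le (Set.mem_union_right _ rfl)

private lemma one_le_depleteTime (pd : ProblemData m n) (T : ℕ)
    (ξ : ℕ → Ω → Fin n) (x : ℕ → Ω → ℝ) (ω : Ω) :
    1 ≤ depleteTime pd T ξ x ω := by
  rcases depleteTime_mem_set pd T ξ x ω with ⟨⟨h2, _⟩, _⟩ | h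
  · omega
  · simp only [Set.mem_singleton_iff] at h
    omega

private lemma term01 (pd : ProblemData m n) {x : ℕ → Ω → ℝ}
    (hx01 : ∀ t ω, x t ω = 0 ∨ x t ω = 1) {ξ : ℕ → Ω → Fin n} (s : ℕ) (ω : Ω) (i : Fin m) :
    0 ≤ pd.c (ξ s ω) i * x s ω ∧ pd.c (ξ s ω) i * x s ω ≤ 1 := by
  rcases hx01 s ω with h | h <;> rw [h]
  · simp
  · rw [mul_one]; exact pd.hc _ i

private lemma Naccept_bounds (pd : ProblemData m n) (T : ℕ) {ξ : ℕ → Ω → Fin n}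
    {x : ℕ → Ω → ℝ} (hx01 : ∀ t ω, x t ω = 0 ∨ x t ω = 1) (j : Fin n) (ω : Ω) :
    0 ≤ Naccept pd T ξ x j ω ∧ Naccept pd T ξ x j ω ≤ T := by
  have h01 : ∀ t, (0 : ℝ) ≤ (if ξ t ω = j then x t ω else 0) ∧
      (if ξ t ω = j then x t ω else 0) ≤ 1 := by
    intro t
    rcases hx01 t ω with h | h <;> split <;> simp [h]
  constructor
  · exact Finset.sum_nonneg fun t _ => (h01 t).1
  · calc Naccept pd T ξ x j ω ≤ ∑ t ∈ Finset.Icc 1 T, (1 : ℝ) :=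
          Finset.sum_le_sum fun t _ => (h01 t).2
      _ = T := by simp

private lemma partial_sum_le (pd : ProblemData m n) (T : ℕ) {ξ : ℕ → Ω → Fin n}
    {x : ℕ → Ω → ℝ} (hx01 : ∀ t ω, x t ω = 0 ∨ x t ω = 1) {t : ℕ} (ht : t ≤ T + 1) (ω : Ω)
    (i : Fin m) :
    ∑ s ∈ Finset.Icc 1 (t - 1), pd.c (ξ s ω) i * x s ω
      ≤ ∑ s ∈ Finset.Icc 1 T, pd.c (ξ s ω) i * x s ω :=
  Finset.sum_le_sum_of_subset_of_nonneg
    (Finset.Icc_subset_Icc_right (by omega))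
    (fun s _ _ => (term01 pd hx01 s ω i).1)

private lemma partial_sum_bounds (pd : ProblemData m n) (T : ℕ) {ξ : ℕ → Ω → Fin n}
    {x : ℕ → Ω → ℝ} (hx01 : ∀ t ω, x t ω = 0 ∨ x t ω = 1) {t : ℕ} (ht : t ≤ T + 1) (ω : Ω)
    (i : Fin m) :
    0 ≤ ∑ s ∈ Finset.Icc 1 (t - 1), pd.c (ξ s ω) i * x s ω ∧
      ∑ s ∈ Finset.Icc 1 (t - 1), pd.c (ξ s ω) i * x s ω ≤ T := by
  constructor
  · exact Finset.sum_nonneg fun s _ => (term01 pd hx01 s ω i).1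
  · calc ∑ s ∈ Finset.Icc 1 (t - 1), pd.c (ξ s ω) i * x s ω
        ≤ ∑ s ∈ Finset.Icc 1 (t - 1), (1 : ℝ) :=
          Finset.sum_le_sum fun s _ => (term01 pd hx01 s ω i).2
      _ = ((t - 1 : ℕ) : ℝ) := by simp
      _ ≤ T := by
          have : t - 1 ≤ T := by omega
          exact_mod_cast this

private lemma abs_Brem_le (pd : ProblemData m n) (T : ℕ) {ξ : ℕ → Ω → Fin n}
    {x : ℕ → Ω → ℝ} (hx01 : ∀ t ω, x t ω = 0 ∨ x t ω = 1) {t : ℕ} (ht : t ≤ T + 1) (ω : Ω)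
    (i : Fin m) : |Brem pd T ξ x t ω i| ≤ (T : ℝ) * pd.b i + T := by
  obtain ⟨h1, h2⟩ := partial_sum_bounds pd T hx01 ht ω i
  have hb : (0 : ℝ) ≤ (T : ℝ) * pd.b i :=
    mul_nonneg (Nat.cast_nonneg T) (pd.hb_pos i).le
  rw [abs_le]
  unfold Brem
  constructor <;> linarith

private lemma sum_Naccept_mul (pd : ProblemData m n) (T : ℕ) (ξ : ℕ → Ω → Fin n)
    (x : ℕ → Ω → ℝ) (g : Fin n → ℝ) (ω : Ω) :
    ∑ j, Naccept pd T ξ x j ω * g j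
      = ∑ t ∈ Finset.Icc 1 T, g (ξ t ω) * x t ω := by
  unfold Naccept
  simp only [Finset.sum_mul]
  rw [Finset.sum_comm]
  refine Finset.sum_congr rfl fun t _ => ?_
  have h : ∀ j : Fin n, (if ξ t ω = j then x t ω else 0) * g j
      = if ξ t ω = j then x t ω * g j else 0 := by
    intro j; split <;> simp
  rw [Finset.sum_congr rfl fun j _ => h j, Finset.sum_ite_eq]
  simp [mul_comm]

private lemma OPT_le_dualObj (pd : ProblemData m n) (lam : Fin m → ℝ)
    (h0 : ∀ i, 0 ≤ lam i) : OPT pd ≤ dualObj pd pd.p pd.b lam := by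
  have hM : ∀ j : Fin n, 0 ≤ max (pd.μ j - ∑ i, pd.c j i * lam i) 0 :=
    fun j => le_max_right _ _
  have hd0 : 0 ≤ dualObj pd pd.p pd.b lam :=
    add_nonneg (Finset.sum_nonneg fun i _ => mul_nonneg (pd.hb_pos i).le (h0 i))
      (Finset.sum_nonneg fun j _ => mul_nonneg (pd.hp_pos j).le (hM j))
  refine Real.sSup_le ?_ hd0
  rintro v ⟨y, ⟨hy01, hycon⟩, rfl⟩
  have key : ∀ j : Fin n, pd.p j * pd.μ j * y j ≤
      pd.p j * max (pd.μ j - ∑ i, pd.c j i * lam i) 0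
        + pd.p j * y j * ∑ i, pd.c j i * lam i := by
    intro j
    have hpy : 0 ≤ pd.p j * y j := mul_nonneg (pd.hp_pos j).le (hy01 j).1
    have hle : pd.p j * y j ≤ pd.p j := by
      nlinarith [(hy01 j).2, pd.hp_pos j]
    have h1 : pd.p j * y j * (pd.μ j - ∑ i, pd.c j i * lam i)
        ≤ pd.p j * max (pd.μ j - ∑ i, pd.c j i * lam i) 0 :=
      calc pd.p j * y j * (pd.μ j - ∑ i, pd.c j i * lam i)
          ≤ pd.p j * y j * max (pd.μ j - ∑ i, pd.c j i * lam i) 0 :=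
            mul_le_mul_of_nonneg_left (le_max_left _ _) hpy
        _ ≤ pd.p j * max (pd.μ j - ∑ i, pd.c j i * lam i) 0 :=
            mul_le_mul_of_nonneg_right hle (le_max_right _ _)
    nlinarith [h1]
  have hswap : ∑ j, pd.p j * y j * ∑ i, pd.c j i * lam i
      = ∑ i, (∑ j, pd.p j * y j * pd.c j i) * lam i := by
    simp only [Finset.mul_sum, Finset.sum_mul]
    rw [Finset.sum_comm]
    exact Finset.sum_congr rfl fun i _ => Finset.sum_congr rfl fun j _ => by ring
  calc objective pd pd.p y
      ≤ ∑ j, (pd.p j * max (pd.μ j - ∑ i, pd.c j i * lam i) 0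
          + pd.p j * y j * ∑ i, pd.c j i * lam i) :=
        Finset.sum_le_sum fun j _ => key j
    _ = (∑ j, pd.p j * max (pd.μ j - ∑ i, pd.c j i * lam i) 0)
          + ∑ j, pd.p j * y j * ∑ i, pd.c j i * lam i := Finset.sum_add_distrib
    _ ≤ (∑ j, pd.p j * max (pd.μ j - ∑ i, pd.c j i * lam i) 0)
          + ∑ i, pd.b i * lam i := by
        rw [hswap]
        gcongr with i _
        · exact (h0 i)
        · exact hycon i
    _ = dualObj pd pd.p pd.b lam := by rw [dualObj, add_comm]

private lemma pointwise_key (pd : ProblemData m n) (T : ℕ) (ξ : ℕ → Ω → Fin n)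
    (x : ℕ → Ω → ℝ) (hx01 : ∀ t ω, x t ω = 0 ∨ x t ω = 1) (lam : Fin m → ℝ)
    (h0 : ∀ i, 0 ≤ lam i) (ω : Ω) :
    (T : ℝ) * OPT pd ≤
      (∑ i, lam i * Brem pd T ξ x (depleteTime pd T ξ x ω) ω i)
      + (∑ j, ((T : ℝ) * pd.p j - Naccept pd T ξ x j ω) *
          max (pd.μ j - ∑ i, pd.c j i * lam i) 0)
      + (∑ j, Naccept pd T ξ x j ω *
          max ((∑ i, pd.c j i * lam i) - pd.μ j) 0)
      + (∑ t ∈ Finset.Icc 1 T, pd.μ (ξ t ω) * x t ω) := by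
  set τ := depleteTime pd T ξ x ω with hτ
  set N : Fin n → ℝ := fun j => Naccept pd T ξ x j ω with hN
  set cl : Fin n → ℝ := fun j => ∑ i, pd.c j i * lam i with hcl
  have hrew : (∑ t ∈ Finset.Icc 1 T, pd.μ (ξ t ω) * x t ω) = ∑ j, N j * pd.μ j :=
    (sum_Naccept_mul pd T ξ x pd.μ ω).symm
  have hcons : ∀ i : Fin m, ∑ j, N j * pd.c j i
      = ∑ t ∈ Finset.Icc 1 T, pd.c (ξ t ω) i * x t ω :=
    fun i => sum_Naccept_mul pd T ξ x (fun j => pd.c j i) ω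
  have hmax : ∀ j : Fin n, max (cl j - pd.μ j) 0 - max (pd.μ j - cl j) 0
      = cl j - pd.μ j := by
    intro j
    rcases le_total (pd.μ j) (cl j) with h | h
    · rw [max_eq_left (by linarith), max_eq_right (by linarith)]; ring
    · rw [max_eq_right (by linarith), max_eq_left (by linarith)]; ring
  have h1 : ∑ j, N j * cl j
      = ∑ i, lam i * ∑ t ∈ Finset.Icc 1 T, pd.c (ξ t ω) i * x t ω := by
    calc ∑ j, N j * cl j = ∑ j, ∑ i, N j * pd.c j i * lam i := by
          refine Finset.sum_congr rfl fun j _ => ?_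
          rw [hcl, Finset.mul_sum]
          exact Finset.sum_congr rfl fun i _ => by ring
      _ = ∑ i, ∑ j, N j * pd.c j i * lam i := Finset.sum_comm
      _ = ∑ i, lam i * ∑ j, N j * pd.c j i := by
          refine Finset.sum_congr rfl fun i _ => ?_
          rw [Finset.mul_sum]
          exact Finset.sum_congr rfl fun j _ => by ring
      _ = _ := Finset.sum_congr rfl fun i _ => by rw [hcons i]
  have hRHS : (∑ i, lam i * Brem pd T ξ x τ ω i)
      + (∑ j, ((T : ℝ) * pd.p j - N j) * max (pd.μ j - cl j) 0)
      + (∑ j, N j * max (cl j - pd.μ j) 0)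
      + (∑ j, N j * pd.μ j)
      = (∑ i, lam i * (Brem pd T ξ x τ ω i
            + ∑ t ∈ Finset.Icc 1 T, pd.c (ξ t ω) i * x t ω))
        + ∑ j, (T : ℝ) * (pd.p j * max (pd.μ j - cl j) 0) := by
    have h2 : ∀ j : Fin n, ((T : ℝ) * pd.p j - N j) * max (pd.μ j - cl j) 0
        + N j * max (cl j - pd.μ j) 0 + N j * pd.μ j
        = (T : ℝ) * (pd.p j * max (pd.μ j - cl j) 0) + N j * cl j := by
      intro j
      have h := hmax j
      have h' : max (cl j - pd.μ j) 0 = cl j - pd.μ j + max (pd.μ j - cl j) 0 := by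
        linarith
      rw [h']; ring
    have h3 : (∑ j, ((T : ℝ) * pd.p j - N j) * max (pd.μ j - cl j) 0)
        + (∑ j, N j * max (cl j - pd.μ j) 0) + (∑ j, N j * pd.μ j)
        = (∑ j, (T : ℝ) * (pd.p j * max (pd.μ j - cl j) 0)) + ∑ j, N j * cl j := by
      rw [← Finset.sum_add_distrib, ← Finset.sum_add_distrib, ← Finset.sum_add_distrib]
      exact Finset.sum_congr rfl fun j _ => h2 j
    have h4 : ∑ i, lam i * (Brem pd T ξ x τ ω i
          + ∑ t ∈ Finset.Icc 1 T, pd.c (ξ t ω) i * x t ω)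
        = (∑ i, lam i * Brem pd T ξ x τ ω i)
          + ∑ i, lam i * ∑ t ∈ Finset.Icc 1 T, pd.c (ξ t ω) i * x t ω := by
      rw [← Finset.sum_add_distrib]
      exact Finset.sum_congr rfl fun i _ => by ring
    linarith [h3, h1, h4]
  have hBrem : ∀ i : Fin m, (T : ℝ) * pd.b i ≤ Brem pd T ξ x τ ω i
      + ∑ t ∈ Finset.Icc 1 T, pd.c (ξ t ω) i * x t ω := by
    intro i
    have hle := partial_sum_le pd T (ξ := ξ) (x := x) hx01 (t := τ) (depleteTime_le pd T ξ x ω) ω i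
    unfold Brem
    linarith
  rw [hrew, hRHS]
  have hOPT := OPT_le_dualObj pd lam h0
  calc (T : ℝ) * OPT pd ≤ (T : ℝ) * dualObj pd pd.p pd.b lam :=
        mul_le_mul_of_nonneg_left hOPT (Nat.cast_nonneg T)
    _ = (∑ i, (T : ℝ) * (pd.b i * lam i))
        + ∑ j, (T : ℝ) * (pd.p j * max (pd.μ j - cl j) 0) := by
        rw [dualObj, mul_add, Finset.mul_sum, Finset.mul_sum]
    _ ≤ _ := by
        refine add_le_add (Finset.sum_le_sum fun i _ => ?_) le_rfl
        calc (T : ℝ) * (pd.b i * lam i) = lam i * ((T : ℝ) * pd.b i) := by ring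
          _ ≤ lam i * (Brem pd T ξ x τ ω i
              + ∑ t ∈ Finset.Icc 1 T, pd.c (ξ t ω) i * x t ω) :=
            mul_le_mul_of_nonneg_left (hBrem i) (h0 i)

variable [MeasurableSpace Ω]

private lemma measurable_Brem (pd : ProblemData m n) (T : ℕ) {ξ : ℕ → Ω → Fin n}
    {x : ℕ → Ω → ℝ} (hξ : ∀ t, Measurable (ξ t)) (hx : ∀ t, Measurable (x t))
    (t : ℕ) (i : Fin m) : Measurable fun ω => Brem pd T ξ x t ω i := by
  unfold Brem
  exact measurable_const.sub (Finset.measurable_sum _ fun s _ =>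
    ((measurable_of_countable fun j => pd.c j i).comp (hξ s)).mul (hx s))

private lemma measurable_depleteTime (pd : ProblemData m n) (T : ℕ)
    {ξ : ℕ → Ω → Fin n} {x : ℕ → Ω → ℝ} (hξ : ∀ t, Measurable (ξ t))
    (hx : ∀ t, Measurable (x t)) : Measurable (depleteTime pd T ξ x) := by
  have hQ : ∀ u : ℕ, MeasurableSet
      {ω : Ω | ((2 ≤ u ∧ u ≤ T) ∧ ∃ i, Brem pd T ξ x u ω i ≤ 0) ∨ u = T + 1} := by
    intro u
    have h1 : MeasurableSet {ω : Ω | ∃ i, Brem pd T ξ x u ω i ≤ 0} := by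
      rw [Set.setOf_exists]
      exact MeasurableSet.iUnion fun i =>
        measurableSet_le (measurable_Brem pd T hξ hx u i) measurable_const
    by_cases h : 2 ≤ u ∧ u ≤ T <;> by_cases h2 : u = T + 1 <;>
      simp [h, h2, h1, Set.setOf_and, Set.setOf_or]
  apply measurable_to_countable'
  intro t
  have heq : depleteTime pd T ξ x ⁻¹' {t} =
      {ω : Ω | ((2 ≤ t ∧ t ≤ T) ∧ ∃ i, Brem pd T ξ x t ω i ≤ 0) ∨ t = T + 1} ∩
      ⋂ (s : ℕ) (_ : s < t),
        {ω : Ω | ((2 ≤ s ∧ s ≤ T) ∧ ∃ i, Brem pd T ξ x s ω i ≤ 0) ∨ s = T + 1}ᶜ := by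
    ext ω
    simp only [Set.mem_preimage, Set.mem_singleton_iff, depleteTime,
      Set.mem_inter_iff, Set.mem_iInter, Set.mem_compl_iff, Set.mem_setOf_eq]
    rw [nat_sInf_eq_iff'
      (S := {t | (2 ≤ t ∧ t ≤ T) ∧ ∃ i, Brem pd T ξ x t ω i ≤ 0} ∪ {T + 1})
      ⟨T + 1, Set.mem_union_right _ rfl⟩]
    simp only [Set.mem_union, Set.mem_setOf_eq, Set.mem_singleton_iff]
  rw [heq]
  exact (hQ t).inter (MeasurableSet.iInter fun s =>
    MeasurableSet.iInter fun _ => (hQ s).compl)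

private lemma BremAt_eq (pd : ProblemData m n) (T : ℕ) (ξ : ℕ → Ω → Fin n)
    (x : ℕ → Ω → ℝ) (ω : Ω) (i : Fin m) :
    Brem pd T ξ x (depleteTime pd T ξ x ω) ω i =
      ∑ t ∈ Finset.Icc 1 (T + 1),
        if depleteTime pd T ξ x ω = t then Brem pd T ξ x t ω i else 0 := by
  rw [Finset.sum_ite_eq]
  rw [if_pos]
  rw [Finset.mem_Icc]
  exact ⟨one_le_depleteTime pd T ξ x ω, depleteTime_le pd T ξ x ω⟩

private lemma measurable_BremAt (pd : ProblemData m n) (T : ℕ) {ξ : ℕ → Ω → Fin n}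
    {x : ℕ → Ω → ℝ} (hξ : ∀ t, Measurable (ξ t)) (hx : ∀ t, Measurable (x t))
    (i : Fin m) :
    Measurable fun ω => Brem pd T ξ x (depleteTime pd T ξ x ω) ω i := by
  have : (fun ω => Brem pd T ξ x (depleteTime pd T ξ x ω) ω i)
      = fun ω => ∑ t ∈ Finset.Icc 1 (T + 1),
          if depleteTime pd T ξ x ω = t then Brem pd T ξ x t ω i else 0 :=
    funext fun ω => BremAt_eq pd T ξ x ω i
  rw [this]
  exact Finset.measurable_sum _ fun t _ =>
    Measurable.ite (measurable_depleteTime pd T hξ hx (measurableSet_singleton t))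
      (measurable_Brem pd T hξ hx t i) measurable_const

private lemma integrable_of_bound {P : Measure Ω} [IsFiniteMeasure P] {f : Ω → ℝ}
    (hf : Measurable f) (C : ℝ) (hC : ∀ ω, |f ω| ≤ C) : Integrable f P :=
  (integrable_const C).mono' hf.aestronglyMeasurable
    (Filter.Eventually.of_forall fun ω => by simpa using hC ω)

end AuxProof

/-- Regret decomposition for a fixed dual optimal `λ ∈ D*`
and an arbitrary nonanticipating online policy. -/
theorem regret_decomposition_fixed_dual {m n : ℕ} (pd : ProblemData m n)
    (T : ℕ) (R : PolicyRun pd T) (lam : Fin m → ℝ) (hlam : lam ∈ Dstar pd) :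
    R.regret ≤
      (∫ ω, (∑ i, lam i *
          Brem pd T R.ξ R.x (depleteTime pd T R.ξ R.x ω) ω i) ∂(R.P))
      + (∫ ω, (∑ j, ((T : ℝ) * pd.p j - Naccept pd T R.ξ R.x j ω) *
          max (pd.μ j - ∑ i, pd.c j i * lam i) 0) ∂(R.P))
      + (∫ ω, (∑ j, Naccept pd T R.ξ R.x j ω *
          max ((∑ i, pd.c j i * lam i) - pd.μ j) 0) ∂(R.P)) := by
  classical
  letI := R.mΩ
  haveI := R.hP
  obtain ⟨h0, -⟩ := hlam
  have hx_meas : ∀ t, Measurable (R.x t) := by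
    intro t
    refine (R.hx_adapted t).mono ?_ le_rfl
    refine iSup_le fun s => iSup_le fun _ => ?_
    exact measurable_iff_comap_le.mp ((R.hξ_meas s).prodMk (R.hU_meas s))
  set f0 : R.Ω → ℝ := fun ω => ∑ t ∈ Finset.Icc 1 T, pd.μ (R.ξ t ω) * R.x t ω with hf0
  set f1 : R.Ω → ℝ := fun ω => ∑ i, lam i *
      Brem pd T R.ξ R.x (depleteTime pd T R.ξ R.x ω) ω i with hf1
  set f2 : R.Ω → ℝ := fun ω => ∑ j, ((T : ℝ) * pd.p j - Naccept pd T R.ξ R.x j ω) *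
      max (pd.μ j - ∑ i, pd.c j i * lam i) 0 with hf2
  set f3 : R.Ω → ℝ := fun ω => ∑ j, Naccept pd T R.ξ R.x j ω *
      max ((∑ i, pd.c j i * lam i) - pd.μ j) 0 with hf3
  have hm0 : Measurable f0 := Finset.measurable_sum _ fun t _ =>
    ((measurable_of_countable pd.μ).comp (R.hξ_meas t)).mul (hx_meas t)
  have hmN : ∀ j, Measurable fun ω => Naccept pd T R.ξ R.x j ω := fun j =>
    Finset.measurable_sum _ fun t _ =>
      Measurable.ite ((R.hξ_meas t) (measurableSet_singleton j)) (hx_meas t)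
        measurable_const
  have hm1 : Measurable f1 := Finset.measurable_sum _ fun i _ =>
    measurable_const.mul (measurable_BremAt pd T R.hξ_meas hx_meas i)
  have hm2 : Measurable f2 := Finset.measurable_sum _ fun j _ =>
    ((measurable_const.sub (hmN j)).mul measurable_const)
  have hm3 : Measurable f3 := Finset.measurable_sum _ fun j _ =>
    ((hmN j).mul measurable_const)
  have hb0 : ∀ ω, |f0 ω| ≤ T := by
    intro ω
    calc |f0 ω| ≤ ∑ t ∈ Finset.Icc 1 T, |pd.μ (R.ξ t ω) * R.x t ω| :=
          Finset.abs_sum_le_sum_abs _ _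
      _ ≤ ∑ t ∈ Finset.Icc 1 T, (1 : ℝ) := by
          refine Finset.sum_le_sum fun t _ => ?_
          rcases R.hx01 t ω with h | h <;> rw [h]
          · simp
          · rw [mul_one, abs_of_nonneg (pd.hμ _).1]; exact (pd.hμ _).2
      _ = T := by simp
  have hb1 : ∀ ω, |f1 ω| ≤ ∑ i, lam i * ((T : ℝ) * pd.b i + T) := by
    intro ω
    calc |f1 ω| ≤ ∑ i, |lam i * Brem pd T R.ξ R.x (depleteTime pd T R.ξ R.x ω) ω i| :=
          Finset.abs_sum_le_sum_abs _ _
      _ ≤ ∑ i, lam i * ((T : ℝ) * pd.b i + T) := by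
          refine Finset.sum_le_sum fun i _ => ?_
          rw [abs_mul, abs_of_nonneg (h0 i)]
          exact mul_le_mul_of_nonneg_left
            (abs_Brem_le pd T R.hx01 (depleteTime_le pd T R.ξ R.x ω) ω i) (h0 i)
  have hb2 : ∀ ω, |f2 ω| ≤ ∑ j, ((T : ℝ) * pd.p j + T) *
      max (pd.μ j - ∑ i, pd.c j i * lam i) 0 := by
    intro ω
    calc |f2 ω| ≤ ∑ j, |((T : ℝ) * pd.p j - Naccept pd T R.ξ R.x j ω) *
          max (pd.μ j - ∑ i, pd.c j i * lam i) 0| := Finset.abs_sum_le_sum_abs _ _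
      _ ≤ _ := by
          refine Finset.sum_le_sum fun j _ => ?_
          rw [abs_mul,
            abs_of_nonneg (le_max_right (pd.μ j - ∑ i, pd.c j i * lam i) (0:ℝ))]
          refine mul_le_mul_of_nonneg_right ?_ (le_max_right _ _)
          obtain ⟨hN0, hNT⟩ := Naccept_bounds pd T R.hx01 j ω
          rw [abs_le]
          have hp := (pd.hp_pos j).le
          have hT : (0:ℝ) ≤ (T:ℝ) := Nat.cast_nonneg T
          constructor <;> nlinarith
  have hb3 : ∀ ω, |f3 ω| ≤ ∑ j, (T : ℝ) *
      max ((∑ i, pd.c j i * lam i) - pd.μ j) 0 := by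
    intro ω
    calc |f3 ω| ≤ ∑ j, |Naccept pd T R.ξ R.x j ω *
          max ((∑ i, pd.c j i * lam i) - pd.μ j) 0| := Finset.abs_sum_le_sum_abs _ _
      _ ≤ _ := by
          refine Finset.sum_le_sum fun j _ => ?_
          rw [abs_mul,
            abs_of_nonneg (le_max_right ((∑ i, pd.c j i * lam i) - pd.μ j) (0:ℝ))]
          refine mul_le_mul_of_nonneg_right ?_ (le_max_right _ _)
          obtain ⟨hN0, hNT⟩ := Naccept_bounds pd T R.hx01 j ω
          rw [abs_of_nonneg hN0]; exact hNT
  have hi0 : MeasureTheory.Integrable f0 R.P := integrable_of_bound hm0 _ hb0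
  have hi1 : MeasureTheory.Integrable f1 R.P := integrable_of_bound hm1 _ hb1
  have hi2 : MeasureTheory.Integrable f2 R.P := integrable_of_bound hm2 _ hb2
  have hi3 : MeasureTheory.Integrable f3 R.P := integrable_of_bound hm3 _ hb3
  have hpt : ∀ ω, (T : ℝ) * OPT pd ≤ f1 ω + f2 ω + f3 ω + f0 ω := fun ω =>
    pointwise_key pd T R.ξ R.x R.hx01 lam h0 ω
  have hint : (T : ℝ) * OPT pd ≤ ∫ ω, (f1 ω + f2 ω + f3 ω + f0 ω) ∂(R.P) := by
    have hI : MeasureTheory.Integrable (fun ω => f1 ω + f2 ω + f3 ω + f0 ω) R.P :=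
      ((hi1.add hi2).add hi3).add hi0
    calc (T : ℝ) * OPT pd = ∫ _ω, (T : ℝ) * OPT pd ∂(R.P) := by
          simp [MeasureTheory.integral_const]
      _ ≤ _ := MeasureTheory.integral_mono (MeasureTheory.integrable_const _) hI hpt
  have hsplit : ∫ ω, (f1 ω + f2 ω + f3 ω + f0 ω) ∂(R.P)
      = (∫ ω, f1 ω ∂(R.P)) + (∫ ω, f2 ω ∂(R.P)) + (∫ ω, f3 ω ∂(R.P)) + ∫ ω, f0 ω ∂(R.P) := by
    have e1 : ∫ ω, ((f1 ω + f2 ω + f3 ω) + f0 ω) ∂(R.P)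
        = (∫ ω, (f1 ω + f2 ω + f3 ω) ∂(R.P)) + ∫ ω, f0 ω ∂(R.P) :=
      MeasureTheory.integral_add ((hi1.add hi2).add hi3) hi0
    have e2 : ∫ ω, ((f1 ω + f2 ω) + f3 ω) ∂(R.P)
        = (∫ ω, (f1 ω + f2 ω) ∂(R.P)) + ∫ ω, f3 ω ∂(R.P) :=
      MeasureTheory.integral_add (hi1.add hi2) hi3
    have e3 : ∫ ω, (f1 ω + f2 ω) ∂(R.P) = (∫ ω, f1 ω ∂(R.P)) + ∫ ω, f2 ω ∂(R.P) :=
      MeasureTheory.integral_add hi1 hi2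
    rw [e1, e2, e3]
  have hreg : PolicyRun.regret R = (T : ℝ) * OPT pd - ∫ ω, f0 ω ∂(R.P) := rfl
  rw [hreg]
  linarith [hint, hsplit]


end FairOnline
end

section
/- Under dual nondegeneracy, there exists a constant L > 0 such that for every pair (b̂, p̂) ∈ ℝ^m × ℝ^n satisfying b̂_i ∈ [b_i − L, b_i + L] for all i ∈ B, b̂_i ∈ [b_i − L, +∞) for all i ∈ N, and p̂_j ∈ [p_j − L, p_j + L] for all j, every optimal solution of the perturbed dual problem minimize b̂^⊤λ + Σ_{j=1}^n p̂_j (μ_j − c_j^⊤λ)_+ over λ ≥ 0 belongs to D*, the optimal solution set of the original dual (with data (b, p)). -/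
open MeasureTheory (Measure IsProbabilityMeasure)
open ProbabilityTheory (iIndepFun IndepFun)
open scoped BigOperators

namespace FairOnline

variable {m n : ℕ}

section StableAux

open Finset

variable {m n : ℕ}

/-- Pattern of the signs of `μ_j - c_j·λ`. -/
noncomputable def patv (pd : ProblemData m n) (lam : Fin m → ℝ) : Fin n → Fin 3 := fun j =>
  if 0 < pd.μ j - ∑ i, pd.c j i * lam i then 2
  else if pd.μ j - ∑ i, pd.c j i * lam i = 0 then 1 else 0

/-- Directional derivative of the dual objective, as a function of the pattern. -/
noncomputable def FdirP (pd : ProblemData m n) (P : Fin n → Fin 3) (d : Fin m → ℝ) : ℝ :=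
  ∑ i, pd.b i * d i + ∑ j, pd.p j *
    (if P j = 2 then -(∑ i, pd.c j i * d i)
     else if P j = 1 then max (-(∑ i, pd.c j i * d i)) 0 else 0)

lemma mul_le_max {y x : ℝ} (hy0 : 0 ≤ y) (hy1 : y ≤ 1) : y * x ≤ max x 0 := by
  rcases le_or_gt 0 x with h | h
  · exact le_max_of_le_left (by nlinarith)
  · exact le_max_of_le_right (by nlinarith)

lemma swap_sum (pd : ProblemData m n) (w : Fin n → ℝ) (lam : Fin m → ℝ) :
    ∑ j, w j * (∑ i, pd.c j i * lam i) = ∑ i, lam i * (∑ j, w j * pd.c j i) := by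
  calc ∑ j, w j * (∑ i, pd.c j i * lam i)
      = ∑ j, ∑ i, lam i * (w j * pd.c j i) := by
        refine Finset.sum_congr rfl fun j _ => ?_
        rw [Finset.mul_sum]; exact Finset.sum_congr rfl fun i _ => by ring
    _ = ∑ i, ∑ j, lam i * (w j * pd.c j i) := Finset.sum_comm
    _ = ∑ i, lam i * (∑ j, w j * pd.c j i) := by
        refine Finset.sum_congr rfl fun i _ => ?_
        rw [Finset.mul_sum]

lemma pos_lower {m : ℕ} (hm : 0 < m) (v : Fin m → ℝ) (hv : ∀ i, 0 ≤ v i) :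
    ∃ ε : ℝ, 0 < ε ∧ ∀ i, v i = 0 ∨ ε ≤ v i := by
  have hne : (Finset.univ : Finset (Fin m)).Nonempty := ⟨⟨0, hm⟩, Finset.mem_univ _⟩
  classical
  refine ⟨Finset.univ.inf' hne (fun i => if v i = 0 then 1 else v i), ?_, ?_⟩
  · rw [Finset.lt_inf'_iff]
    intro i _
    split
    · exact one_pos
    · exact (hv i).lt_of_ne (Ne.symm (by assumption))
  · intro i
    by_cases h : v i = 0
    · exact Or.inl h
    · refine Or.inr (le_trans (Finset.inf'_le _ (Finset.mem_univ i)) ?_)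
      rw [if_neg h]

lemma dualObj_continuous (pd : ProblemData m n) (p' : Fin n → ℝ) (b' : Fin m → ℝ) :
    Continuous (dualObj pd p' b') := by
  apply Continuous.add
  · exact continuous_finset_sum _ fun i _ => continuous_const.mul (continuous_apply i)
  · exact continuous_finset_sum _ fun j _ => continuous_const.mul
      (((continuous_const.sub (continuous_finset_sum _ fun i _ =>
        continuous_const.mul (continuous_apply i))).max continuous_const))

lemma seg_ineq (pd : ProblemData m n) (p' : Fin n → ℝ) (b' : Fin m → ℝ)
    (hp' : ∀ j, 0 ≤ p' j) (x y : Fin m → ℝ) {a b : ℝ}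
    (ha : 0 ≤ a) (hb : 0 ≤ b) (hab : a + b = 1) :
    dualObj pd p' b' (fun i => a * x i + b * y i)
      ≤ a * dualObj pd p' b' x + b * dualObj pd p' b' y := by
  simp only [dualObj]
  have h1 : ∑ i, b' i * (a * x i + b * y i)
      = a * ∑ i, b' i * x i + b * ∑ i, b' i * y i := by
    rw [Finset.mul_sum, Finset.mul_sum, ← Finset.sum_add_distrib]
    exact Finset.sum_congr rfl fun i _ => by ring
  have h2 : ∀ j, p' j * max (pd.μ j - ∑ i, pd.c j i * (a * x i + b * y i)) 0
      ≤ a * (p' j * max (pd.μ j - ∑ i, pd.c j i * x i) 0)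
        + b * (p' j * max (pd.μ j - ∑ i, pd.c j i * y i) 0) := by
    intro j
    have hc : pd.μ j - ∑ i, pd.c j i * (a * x i + b * y i)
        = a * (pd.μ j - ∑ i, pd.c j i * x i) + b * (pd.μ j - ∑ i, pd.c j i * y i) := by
      have e : ∑ i, pd.c j i * (a * x i + b * y i)
          = a * (∑ i, pd.c j i * x i) + b * (∑ i, pd.c j i * y i) := by
        rw [Finset.mul_sum, Finset.mul_sum, ← Finset.sum_add_distrib]
        exact Finset.sum_congr rfl fun i _ => by ring
      rw [e]; linear_combination (-(pd.μ j)) * hab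
    rw [hc]
    have hmax : max (a * (pd.μ j - ∑ i, pd.c j i * x i) + b * (pd.μ j - ∑ i, pd.c j i * y i)) 0
        ≤ a * max (pd.μ j - ∑ i, pd.c j i * x i) 0 + b * max (pd.μ j - ∑ i, pd.c j i * y i) 0 := by
      apply max_le
      · gcongr <;> [exact le_max_left _ _; exact le_max_left _ _]
      · positivity
    have hp := hp' j
    calc p' j * max (a * (pd.μ j - ∑ i, pd.c j i * x i) + b * (pd.μ j - ∑ i, pd.c j i * y i)) 0
        ≤ p' j * (a * max (pd.μ j - ∑ i, pd.c j i * x i) 0 + b * max (pd.μ j - ∑ i, pd.c j i * y i) 0) :=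
          mul_le_mul_of_nonneg_left hmax hp
      _ = a * (p' j * max (pd.μ j - ∑ i, pd.c j i * x i) 0)
          + b * (p' j * max (pd.μ j - ∑ i, pd.c j i * y i) 0) := by ring
  have h3 : ∑ j, p' j * max (pd.μ j - ∑ i, pd.c j i * (a * x i + b * y i)) 0
      ≤ a * ∑ j, p' j * max (pd.μ j - ∑ i, pd.c j i * x i) 0
        + b * ∑ j, p' j * max (pd.μ j - ∑ i, pd.c j i * y i) 0 := by
    rw [Finset.mul_sum, Finset.mul_sum, ← Finset.sum_add_distrib]
    exact Finset.sum_le_sum fun j _ => h2 j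
  linarith [h1, h3]

lemma exact_dir (pd : ProblemData m n) (lam d : Fin m → ℝ) :
    ∃ t₀ : ℝ, 0 < t₀ ∧ ∀ t : ℝ, 0 ≤ t → t ≤ t₀ →
      dualObj pd pd.p pd.b (fun i => lam i + t * d i)
        = dualObj pd pd.p pd.b lam + t * FdirP pd (patv pd lam) d := by
  classical
  have hne : (Finset.univ : Finset (Fin n)).Nonempty := ⟨⟨0, pd.hn⟩, Finset.mem_univ _⟩
  refine ⟨Finset.univ.inf' hne (fun j => if pd.μ j - ∑ i, pd.c j i * lam i = 0 then 1
      else |pd.μ j - ∑ i, pd.c j i * lam i| / (|∑ i, pd.c j i * d i| + 1)), ?_, ?_⟩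
  · rw [Finset.lt_inf'_iff]
    intro j _
    split
    · exact one_pos
    · have h := abs_pos.mpr (by assumption : pd.μ j - ∑ i, pd.c j i * lam i ≠ 0)
      positivity
  · intro t ht0 ht1
    have hbound : ∀ j, pd.μ j - ∑ i, pd.c j i * lam i ≠ 0 →
        t * |∑ i, pd.c j i * d i| < |pd.μ j - ∑ i, pd.c j i * lam i| := by
      intro j hj
      have h1 := Finset.inf'_le (fun j => if pd.μ j - ∑ i, pd.c j i * lam i = 0 then 1
          else |pd.μ j - ∑ i, pd.c j i * lam i| / (|∑ i, pd.c j i * d i| + 1)) (Finset.mem_univ j)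
      rw [if_neg hj] at h1
      have hpos : 0 < |pd.μ j - ∑ i, pd.c j i * lam i| := abs_pos.mpr hj
      have h2 : |pd.μ j - ∑ i, pd.c j i * lam i| / (|∑ i, pd.c j i * d i| + 1)
          * |∑ i, pd.c j i * d i| < |pd.μ j - ∑ i, pd.c j i * lam i| := by
        rw [div_mul_eq_mul_div, div_lt_iff₀ (by positivity)]
        nlinarith [abs_nonneg (∑ i, pd.c j i * d i)]
      calc t * |∑ i, pd.c j i * d i|
          ≤ |pd.μ j - ∑ i, pd.c j i * lam i| / (|∑ i, pd.c j i * d i| + 1)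
            * |∑ i, pd.c j i * d i| :=
            mul_le_mul_of_nonneg_right (le_trans ht1 h1) (abs_nonneg _)
        _ < |pd.μ j - ∑ i, pd.c j i * lam i| := h2
    have hsum : ∀ j, (∑ i, pd.c j i * (lam i + t * d i))
        = (∑ i, pd.c j i * lam i) + t * (∑ i, pd.c j i * d i) := by
      intro j
      rw [Finset.mul_sum, ← Finset.sum_add_distrib]
      exact Finset.sum_congr rfl fun i _ => by ring
    have hbsum : ∑ i, pd.b i * (lam i + t * d i)
        = ∑ i, pd.b i * lam i + t * ∑ i, pd.b i * d i := by
      rw [Finset.mul_sum, ← Finset.sum_add_distrib]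
      exact Finset.sum_congr rfl fun i _ => by ring
    have key : ∀ j, max (pd.μ j - ((∑ i, pd.c j i * lam i) + t * (∑ i, pd.c j i * d i))) 0
        = max (pd.μ j - ∑ i, pd.c j i * lam i) 0
          + t * (if patv pd lam j = 2 then -(∑ i, pd.c j i * d i)
              else if patv pd lam j = 1 then max (-(∑ i, pd.c j i * d i)) 0 else 0) := by
      intro j
      rcases lt_trichotomy (pd.μ j - ∑ i, pd.c j i * lam i) 0 with h | h | h
      · have hp : patv pd lam j = 0 := by
          simp only [patv]; rw [if_neg (by linarith), if_neg (by linarith)]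
        rw [hp, if_neg (by decide), if_neg (by decide)]
        have hb := hbound j (by linarith)
        have hmul : t * -|∑ i, pd.c j i * d i| ≤ t * (∑ i, pd.c j i * d i) :=
          mul_le_mul_of_nonneg_left (neg_abs_le _) ht0
        have hre : t * -|∑ i, pd.c j i * d i| = -(t * |∑ i, pd.c j i * d i|) := by ring
        have habs : |pd.μ j - ∑ i, pd.c j i * lam i| = -(pd.μ j - ∑ i, pd.c j i * lam i) :=
          abs_of_neg h
        have h2 : pd.μ j - ((∑ i, pd.c j i * lam i) + t * (∑ i, pd.c j i * d i)) < 0 := by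
          linarith
        rw [max_eq_right h2.le, max_eq_right h.le]
        ring
      · have hp : patv pd lam j = 1 := by
          simp only [patv]; rw [if_neg (by linarith), if_pos h]
        rw [hp, if_neg (by decide), if_pos rfl]
        have h0 : pd.μ j - ((∑ i, pd.c j i * lam i) + t * (∑ i, pd.c j i * d i))
            = -(t * (∑ i, pd.c j i * d i)) := by linarith
        rw [h0, h]
        rcases le_or_gt (∑ i, pd.c j i * d i) 0 with he | he
        · have e1 : max (-(t * (∑ i, pd.c j i * d i))) 0 = -(t * (∑ i, pd.c j i * d i)) :=
            max_eq_left (by nlinarith)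
          have e2 : max (-(∑ i, pd.c j i * d i)) 0 = -(∑ i, pd.c j i * d i) :=
            max_eq_left (by linarith)
          rw [e1, e2, max_self]
          ring
        · have e1 : max (-(t * (∑ i, pd.c j i * d i))) 0 = 0 :=
            max_eq_right (by nlinarith)
          have e2 : max (-(∑ i, pd.c j i * d i)) 0 = 0 :=
            max_eq_right (by linarith)
          rw [e1, e2, max_self]
          ring
      · have hp : patv pd lam j = 2 := by simp only [patv]; rw [if_pos h]
        rw [hp, if_pos rfl]
        have hb := hbound j (by linarith)
        have hmul : t * (∑ i, pd.c j i * d i) ≤ t * |∑ i, pd.c j i * d i| :=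
          mul_le_mul_of_nonneg_left (le_abs_self _) ht0
        have habs : |pd.μ j - ∑ i, pd.c j i * lam i| = pd.μ j - ∑ i, pd.c j i * lam i :=
          abs_of_pos h
        have h2 : 0 < pd.μ j - ((∑ i, pd.c j i * lam i) + t * (∑ i, pd.c j i * d i)) := by
          linarith
        rw [max_eq_left h2.le, max_eq_left h.le]
        ring
    simp only [dualObj, hsum, hbsum]
    have hkey : ∑ j, pd.p j * max (pd.μ j - ((∑ i, pd.c j i * lam i) + t * (∑ i, pd.c j i * d i))) 0
        = ∑ j, pd.p j * (max (pd.μ j - ∑ i, pd.c j i * lam i) 0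
          + t * (if patv pd lam j = 2 then -(∑ i, pd.c j i * d i)
              else if patv pd lam j = 1 then max (-(∑ i, pd.c j i * d i)) 0 else 0)) :=
      Finset.sum_congr rfl fun j _ => by rw [key j]
    rw [hkey]
    have hsplit : ∑ j, pd.p j * (max (pd.μ j - ∑ i, pd.c j i * lam i) 0
        + t * (if patv pd lam j = 2 then -(∑ i, pd.c j i * d i)
            else if patv pd lam j = 1 then max (-(∑ i, pd.c j i * d i)) 0 else 0))
        = ∑ j, pd.p j * max (pd.μ j - ∑ i, pd.c j i * lam i) 0
          + t * ∑ j, pd.p j * (if patv pd lam j = 2 then -(∑ i, pd.c j i * d i)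
              else if patv pd lam j = 1 then max (-(∑ i, pd.c j i * d i)) 0 else 0) := by
      rw [Finset.mul_sum, ← Finset.sum_add_distrib]
      exact Finset.sum_congr rfl fun j _ => by ring
    rw [hsplit]
    simp only [FdirP]
    ring

lemma coord_lb (pd : ProblemData m n) (p' : Fin n → ℝ) (b' : Fin m → ℝ)
    (hp' : ∀ j, 0 ≤ p' j) (lam : Fin m → ℝ) (hlam : ∀ i, 0 ≤ lam i) (i₀ : Fin m)
    (hb' : ∀ i, 0 ≤ b' i) :
    b' i₀ * lam i₀ ≤ dualObj pd p' b' lam := by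
  simp only [dualObj]
  have h1 : b' i₀ * lam i₀ ≤ ∑ i, b' i * lam i := by
    apply Finset.single_le_sum (f := fun i => b' i * lam i)
      (fun i _ => mul_nonneg (hb' i) (hlam i)) (Finset.mem_univ i₀)
  have h2 : (0:ℝ) ≤ ∑ j, p' j * max (pd.μ j - ∑ i, pd.c j i * lam i) 0 :=
    Finset.sum_nonneg fun j _ => mul_nonneg (hp' j) (le_max_right _ _)
  linarith

lemma exists_dual_min (pd : ProblemData m n) :
    ∃ ls, IsDualOptimal pd pd.p pd.b ls := by
  classical
  have hne : (Finset.univ : Finset (Fin m)).Nonempty := ⟨⟨0, pd.hm⟩, Finset.mem_univ _⟩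
  set β := Finset.univ.inf' hne pd.b with hβ
  have hβpos : 0 < β := by rw [hβ, Finset.lt_inf'_iff]; exact fun i _ => pd.hb_pos i
  have hβle : ∀ i, β ≤ pd.b i := fun i => Finset.inf'_le _ (Finset.mem_univ i)
  have hf0 : 0 ≤ dualObj pd pd.p pd.b 0 := by
    simp only [dualObj, Pi.zero_apply, mul_zero, Finset.sum_const_zero, zero_add, sub_zero]
    exact Finset.sum_nonneg fun j _ => mul_nonneg (pd.hp_pos j).le (le_max_right _ _)
  set R := dualObj pd pd.p pd.b 0 / β + 1 with hR
  have hRpos : 0 < R := by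
    have : 0 ≤ dualObj pd pd.p pd.b 0 / β := div_nonneg hf0 hβpos.le
    rw [hR]; linarith
  set K : Set (Fin m → ℝ) := Set.pi Set.univ (fun _ => Set.Icc (0:ℝ) R) with hK
  have hKc : IsCompact K := isCompact_univ_pi fun i => isCompact_Icc
  have h0K : (0 : Fin m → ℝ) ∈ K := fun i _ => ⟨le_refl 0, hRpos.le⟩
  obtain ⟨ls, hlsK, hmin⟩ := hKc.exists_isMinOn ⟨0, h0K⟩
    (dualObj_continuous pd pd.p pd.b).continuousOn
  refine ⟨ls, fun i => (hlsK i (Set.mem_univ i)).1, ?_⟩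
  intro lam' hlam'
  by_cases hcase : ∀ i, lam' i ≤ R
  · exact isMinOn_iff.mp hmin lam' (fun i _ => ⟨hlam' i, hcase i⟩)
  · push_neg at hcase
    obtain ⟨i₀, hi₀⟩ := hcase
    have h1 : pd.b i₀ * lam' i₀ ≤ dualObj pd pd.p pd.b lam' :=
      coord_lb pd pd.p pd.b (fun j => (pd.hp_pos j).le) lam' hlam' i₀ (fun i => (pd.hb_pos i).le)
    have h2 : dualObj pd pd.p pd.b ls ≤ dualObj pd pd.p pd.b 0 := isMinOn_iff.mp hmin 0 h0K
    have h3 : β * R ≤ pd.b i₀ * lam' i₀ :=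
      mul_le_mul (hβle i₀) hi₀.le hRpos.le (pd.hb_pos i₀).le
    have h4 : dualObj pd pd.p pd.b 0 < β * R := by
      have he : β * R = dualObj pd pd.p pd.b 0 + β := by
        rw [hR]; field_simp
      rw [he]; linarith
    linarith

lemma dstar_eq (pd : ProblemData m n) {ls : Fin m → ℝ} (hls : IsDualOptimal pd pd.p pd.b ls)
    {lam : Fin m → ℝ} (hlam : lam ∈ Dstar pd) :
    dualObj pd pd.p pd.b lam = dualObj pd pd.p pd.b ls :=
  le_antisymm (hlam.2 ls hls.1) (hls.2 lam hlam.1)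

lemma dstar_compact (pd : ProblemData m n) {ls : Fin m → ℝ}
    (hls : IsDualOptimal pd pd.p pd.b ls) : IsCompact (Dstar pd) := by
  classical
  have heq : Dstar pd = {lam : Fin m → ℝ | ∀ i, 0 ≤ lam i}
      ∩ {lam | dualObj pd pd.p pd.b lam ≤ dualObj pd pd.p pd.b ls} := by
    ext lam
    constructor
    · intro h; exact ⟨h.1, h.2 ls hls.1⟩
    · rintro ⟨h1, h2⟩; exact ⟨h1, fun l' hl' => le_trans h2 (hls.2 l' hl')⟩
  rw [heq]
  have hcl : IsClosed ({lam : Fin m → ℝ | ∀ i, 0 ≤ lam i}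
      ∩ {lam | dualObj pd pd.p pd.b lam ≤ dualObj pd pd.p pd.b ls}) := by
    apply IsClosed.inter
    · have he2 : {lam : Fin m → ℝ | ∀ i, 0 ≤ lam i} = ⋂ i, {lam : Fin m → ℝ | 0 ≤ lam i} := by
        ext; simp [Set.mem_iInter]
      rw [he2]; exact isClosed_iInter fun i => isClosed_le continuous_const (continuous_apply i)
    · exact isClosed_le (dualObj_continuous pd pd.p pd.b) continuous_const
  have hne : (Finset.univ : Finset (Fin m)).Nonempty := ⟨⟨0, pd.hm⟩, Finset.mem_univ _⟩
  set β := Finset.univ.inf' hne pd.b with hβ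
  have hβpos : 0 < β := by rw [hβ, Finset.lt_inf'_iff]; exact fun i _ => pd.hb_pos i
  have hV : 0 ≤ dualObj pd pd.p pd.b ls := by
    have h := coord_lb pd pd.p pd.b (fun j => (pd.hp_pos j).le) ls hls.1 ⟨0, pd.hm⟩
      (fun i => (pd.hb_pos i).le)
    nlinarith [mul_nonneg (pd.hb_pos ⟨0, pd.hm⟩).le (hls.1 ⟨0, pd.hm⟩)]
  apply (isCompact_closedBall (0 : Fin m → ℝ) (dualObj pd pd.p pd.b ls / β)).of_isClosed_subset hcl
  rintro lam ⟨h1, h2⟩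
  rw [Metric.mem_closedBall, dist_pi_le_iff (div_nonneg hV hβpos.le)]
  intro i
  rw [Real.dist_eq, Pi.zero_apply, sub_zero, abs_of_nonneg (h1 i), le_div_iff₀ hβpos]
  have hb := coord_lb pd pd.p pd.b (fun j => (pd.hp_pos j).le) lam h1 i (fun i => (pd.hb_pos i).le)
  have hβle : β ≤ pd.b i := Finset.inf'_le _ (Finset.mem_univ i)
  have h2' : dualObj pd pd.p pd.b lam ≤ dualObj pd pd.p pd.b ls := h2
  nlinarith [mul_le_mul_of_nonneg_left hβle (h1 i)]

lemma weak_duality (pd : ProblemData m n) (y : Fin n → ℝ)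
    (hyf : Feasible pd pd.p pd.b y) (lam : Fin m → ℝ) (hlam : ∀ i, 0 ≤ lam i) :
    objective pd pd.p y ≤ dualObj pd pd.p pd.b lam := by
  have key : ∀ j, pd.p j * pd.μ j * y j
      ≤ pd.p j * max (pd.μ j - ∑ i, pd.c j i * lam i) 0
        + (pd.p j * y j) * (∑ i, pd.c j i * lam i) := by
    intro j
    have h1 : y j * (pd.μ j - ∑ i, pd.c j i * lam i)
        ≤ max (pd.μ j - ∑ i, pd.c j i * lam i) 0 :=
      mul_le_max (hyf.1 j).1 (hyf.1 j).2
    have h2 := mul_le_mul_of_nonneg_left h1 (pd.hp_pos j).le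
    nlinarith [h2]
  have hsum : objective pd pd.p y
      ≤ ∑ j, (pd.p j * max (pd.μ j - ∑ i, pd.c j i * lam i) 0
          + (pd.p j * y j) * (∑ i, pd.c j i * lam i)) :=
    Finset.sum_le_sum fun j _ => key j
  rw [Finset.sum_add_distrib] at hsum
  have hswap := swap_sum pd (fun j => pd.p j * y j) lam
  rw [hswap] at hsum
  have hfin : ∑ i, lam i * (∑ j, pd.p j * y j * pd.c j i) ≤ ∑ i, pd.b i * lam i := by
    apply Finset.sum_le_sum
    intro i _
    have := mul_le_mul_of_nonneg_left (hyf.2 i) (hlam i)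
    nlinarith [this]
  simp only [dualObj]
  linarith [hsum, hfin]

noncomputable def certLo (pd : ProblemData m n) (ls : Fin m → ℝ) : Fin n → ℝ := fun j =>
  if 0 < pd.μ j - ∑ i, pd.c j i * ls i then 1 else 0

noncomputable def certHi (pd : ProblemData m n) (ls : Fin m → ℝ) : Fin n → ℝ := fun j =>
  if pd.μ j - ∑ i, pd.c j i * ls i < 0 then 0 else 1

noncomputable def certF (pd : ProblemData m n) (s : Fin n → ℝ) : Fin m → ℝ := fun i =>
  pd.b i - ∑ j, pd.p j * s j * pd.c j i

lemma exists_primal_cert (pd : ProblemData m n) (ls : Fin m → ℝ)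
    (hls : IsDualOptimal pd pd.p pd.b ls) :
    ∃ s : Fin n → ℝ, (∀ j, 0 ≤ s j ∧ s j ≤ 1) ∧
      (∀ j, s j * (pd.μ j - ∑ i, pd.c j i * ls i)
          = max (pd.μ j - ∑ i, pd.c j i * ls i) 0) ∧
      (∀ i, ∑ j, pd.p j * s j * pd.c j i ≤ pd.b i) ∧
      (∀ i, ls i ≠ 0 → ∑ j, pd.p j * s j * pd.c j i = pd.b i) := by
  classical
  set Sbox : Set (Fin n → ℝ) := Set.pi Set.univ (fun j => Set.Icc (certLo pd ls j) (certHi pd ls j)) with hSbox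
  set G : Set (Fin m → ℝ) := certF pd '' Sbox with hG
  set K : Set (Fin m → ℝ) := {g | (∀ i, 0 ≤ g i) ∧ ∀ i, ls i ≠ 0 → g i = 0} with hKdef
  suffices hGK : (G ∩ K).Nonempty by
    obtain ⟨g, hgG, hgK⟩ := hGK
    obtain ⟨s, hsbox, hFs⟩ := hgG
    have hsIcc : ∀ j, s j ∈ Set.Icc (certLo pd ls j) (certHi pd ls j) :=
      fun j => hsbox j (Set.mem_univ j)
    have hFsi : ∀ i, pd.b i - ∑ j, pd.p j * s j * pd.c j i = g i := by
      intro i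
      have := congrFun hFs i
      simpa [certF] using this
    refine ⟨s, ?_, ?_, ?_, ?_⟩
    · intro j
      have h := hsIcc j
      constructor
      · refine le_trans ?_ h.1
        simp only [certLo]; split <;> norm_num
      · refine le_trans h.2 ?_
        simp only [certHi]; split <;> norm_num
    · intro j
      rcases lt_trichotomy (pd.μ j - ∑ i, pd.c j i * ls i) 0 with h | h | h
      · have h1 : certHi pd ls j = 0 := by simp only [certHi]; rw [if_pos h]
        have h0 : certLo pd ls j = 0 := by
          simp only [certLo]; rw [if_neg (not_lt.mpr h.le)]
        have hs0 : s j = 0 := le_antisymm (h1 ▸ (hsIcc j).2) (h0 ▸ (hsIcc j).1)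
        rw [hs0, max_eq_right h.le]; ring
      · simp [h]
      · have h1 : certLo pd ls j = 1 := by simp only [certLo]; rw [if_pos h]
        have h2 : certHi pd ls j = 1 := by
          simp only [certHi]; rw [if_neg (not_lt.mpr h.le)]
        have hs1 : s j = 1 := le_antisymm (h2 ▸ (hsIcc j).2) (h1 ▸ (hsIcc j).1)
        rw [hs1, max_eq_left h.le]; ring
    · intro i
      have h0 := hgK.1 i
      linarith [hFsi i]
    · intro i hi0
      have hgi := hgK.2 i hi0
      linarith [hFsi i]
  by_contra hdisj
  have hGcvx : Convex ℝ G := by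
    rintro x ⟨sx, hsx, rfl⟩ y ⟨sy, hsy, rfl⟩ a b ha hb hab
    refine ⟨fun j => a * sx j + b * sy j, ?_, ?_⟩
    · intro j _
      have := convex_Icc (certLo pd ls j) (certHi pd ls j)
        (hsx j (Set.mem_univ j)) (hsy j (Set.mem_univ j)) ha hb hab
      simpa using this
    · funext i
      simp only [certF, Pi.add_apply, Pi.smul_apply, smul_eq_mul]
      have e : ∑ j, pd.p j * (a * sx j + b * sy j) * pd.c j i
          = a * ∑ j, pd.p j * sx j * pd.c j i + b * ∑ j, pd.p j * sy j * pd.c j i := by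
        rw [Finset.mul_sum, Finset.mul_sum, ← Finset.sum_add_distrib]
        exact Finset.sum_congr rfl fun j _ => by ring
      rw [e]; linear_combination (-(pd.b i)) * hab
  have hGcpt : IsCompact G := by
    apply IsCompact.image (isCompact_univ_pi fun j => isCompact_Icc)
    exact continuous_pi fun i => continuous_const.sub (continuous_finset_sum _ fun j _ =>
      (continuous_const.mul (continuous_apply j)).mul continuous_const)
  have hKcvx : Convex ℝ K := by
    intro x hx y hy a b ha hb hab
    constructor
    · intro i
      simp only [Pi.add_apply, Pi.smul_apply, smul_eq_mul]
      exact add_nonneg (mul_nonneg ha (hx.1 i)) (mul_nonneg hb (hy.1 i))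
    · intro i hi0
      simp only [Pi.add_apply, Pi.smul_apply, smul_eq_mul, hx.2 i hi0, hy.2 i hi0]
      ring
  have hKcl : IsClosed K := by
    have he : K = {g : Fin m → ℝ | ∀ i, 0 ≤ g i} ∩ {g | ∀ i, ls i ≠ 0 → g i = 0} := rfl
    rw [he]
    apply IsClosed.inter
    · have he2 : {g : Fin m → ℝ | ∀ i, 0 ≤ g i} = ⋂ i, {g : Fin m → ℝ | 0 ≤ g i} := by
        ext; simp
      rw [he2]; exact isClosed_iInter fun i => isClosed_le continuous_const (continuous_apply i)
    · have he3 : {g : Fin m → ℝ | ∀ i, ls i ≠ 0 → g i = 0}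
          = ⋂ i, {g : Fin m → ℝ | ls i ≠ 0 → g i = 0} := by ext; simp
      rw [he3]
      refine isClosed_iInter fun i => ?_
      by_cases h : ls i = 0
      · have hu : {g : Fin m → ℝ | ls i ≠ 0 → g i = 0} = Set.univ := by ext g; simp [h]
        rw [hu]; exact isClosed_univ
      · have hu : {g : Fin m → ℝ | ls i ≠ 0 → g i = 0} = {g : Fin m → ℝ | g i = 0} := by
          ext g; simp [h]
        rw [hu]; exact isClosed_eq (continuous_apply i) continuous_const
  have hdisj2 : Disjoint G K :=
    Set.disjoint_iff_inter_eq_empty.mpr (Set.not_nonempty_iff_eq_empty.mp hdisj)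
  obtain ⟨φ, u, v, hGu, huv, hKv⟩ :=
    geometric_hahn_banach_compact_closed hGcvx hGcpt hKcvx hKcl hdisj2
  have h0K : (0 : Fin m → ℝ) ∈ K := ⟨fun i => le_refl 0, fun i _ => rfl⟩
  have hv0 : v < 0 := by
    have h := hKv 0 h0K
    rwa [map_zero] at h
  have hKnn : ∀ g ∈ K, 0 ≤ φ g := by
    intro g hg
    by_contra hlt
    push_neg at hlt
    have hc : 0 < v / φ g + 1 := by
      have : 0 < v / φ g := div_pos_of_neg_of_neg hv0 hlt
      linarith
    have hmem : (v / φ g + 1) • g ∈ K := by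
      constructor
      · intro i
        simp only [Pi.smul_apply, smul_eq_mul]
        exact mul_nonneg hc.le (hg.1 i)
      · intro i hi0
        simp only [Pi.smul_apply, smul_eq_mul, hg.2 i hi0, mul_zero]
    have h2 := hKv _ hmem
    rw [map_smul, smul_eq_mul] at h2
    have h3 : v / φ g * φ g = v := div_mul_cancel₀ v (ne_of_lt hlt)
    nlinarith
  set d : Fin m → ℝ := fun i => φ (fun i' => if i = i' then 1 else 0) with hd
  have hrep : ∀ x : Fin m → ℝ, φ x = ∑ i, x i * d i := by
    intro x
    have h := LinearMap.pi_apply_eq_sum_univ (φ : (Fin m → ℝ) →ₗ[ℝ] ℝ) x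
    simpa [smul_eq_mul, hd] using h
  have hdnn : ∀ i, ls i = 0 → 0 ≤ d i := by
    intro i h0
    apply hKnn
    constructor
    · intro i'; dsimp only; split <;> norm_num
    · intro i' hi'
      dsimp only
      rw [if_neg]
      intro he
      exact hi' (by rw [← he]; exact h0)
  set sd : Fin n → ℝ := fun j => if 0 < pd.μ j - ∑ i, pd.c j i * ls i then 1
      else if pd.μ j - ∑ i, pd.c j i * ls i = 0
        then (if 0 ≤ -(∑ i, pd.c j i * d i) then 1 else 0) else 0 with hsd
  have hsdbox : sd ∈ Sbox := by
    intro j _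
    constructor
    · simp only [certLo, hsd]
      split_ifs <;> norm_num
    · simp only [certHi, hsd]
      split_ifs <;> linarith
  have hmemG : certF pd sd ∈ G := ⟨sd, hsdbox, rfl⟩
  have hFdval : FdirP pd (patv pd ls) d = φ (certF pd sd) := by
    rw [hrep]
    simp only [certF, FdirP]
    have e1 : ∑ i, (pd.b i - ∑ j, pd.p j * sd j * pd.c j i) * d i
        = ∑ i, pd.b i * d i - ∑ i, d i * (∑ j, (pd.p j * sd j) * pd.c j i) := by
      rw [← Finset.sum_sub_distrib]
      exact Finset.sum_congr rfl fun i _ => by ring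
    rw [e1, ← swap_sum pd (fun j => pd.p j * sd j) d]
    have e2 : ∀ j, pd.p j * (if patv pd ls j = 2 then -(∑ i, pd.c j i * d i)
        else if patv pd ls j = 1 then max (-(∑ i, pd.c j i * d i)) 0 else 0)
        = -((pd.p j * sd j) * (∑ i, pd.c j i * d i)) := by
      intro j
      rcases lt_trichotomy (pd.μ j - ∑ i, pd.c j i * ls i) 0 with h | h | h
      · have hp : patv pd ls j = 0 := by
          simp only [patv]; rw [if_neg (not_lt.mpr h.le), if_neg (ne_of_lt h)]
        have hs : sd j = 0 := by
          simp only [hsd]; rw [if_neg (not_lt.mpr h.le), if_neg (ne_of_lt h)]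
        rw [hp, hs, if_neg (by decide), if_neg (by decide)]; ring
      · have hp : patv pd ls j = 1 := by
          simp only [patv]; rw [if_neg (not_lt.mpr h.le), if_pos h]
        have hs : sd j = if 0 ≤ -(∑ i, pd.c j i * d i) then 1 else 0 := by
          simp only [hsd]; rw [if_neg (not_lt.mpr h.le), if_pos h]
        rw [hp, hs, if_neg (by decide), if_pos rfl]
        rcases le_or_gt 0 (-(∑ i, pd.c j i * d i)) with he | he
        · rw [if_pos he, max_eq_left he]; ring
        · rw [if_neg (not_le.mpr he), max_eq_right (by linarith)]; ring
      · have hp : patv pd ls j = 2 := by simp only [patv]; rw [if_pos h]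
        have hs : sd j = 1 := by simp only [hsd]; rw [if_pos h]
        rw [hp, hs, if_pos rfl]; ring
    have e3 : ∑ j, pd.p j * (if patv pd ls j = 2 then -(∑ i, pd.c j i * d i)
        else if patv pd ls j = 1 then max (-(∑ i, pd.c j i * d i)) 0 else 0)
        = ∑ j, -((pd.p j * sd j) * (∑ i, pd.c j i * d i)) :=
      Finset.sum_congr rfl fun j _ => e2 j
    rw [e3, Finset.sum_neg_distrib]
    ring
  have hFdneg : FdirP pd (patv pd ls) d < 0 := by
    have h1 := hGu _ hmemG
    rw [hFdval]; linarith
  obtain ⟨t₀, ht₀, hexact⟩ := exact_dir pd ls d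
  obtain ⟨ε, hεpos, hεlb⟩ := pos_lower pd.hm ls hls.1
  have hnem : (Finset.univ : Finset (Fin m)).Nonempty := ⟨⟨0, pd.hm⟩, Finset.mem_univ _⟩
  set M : ℝ := Finset.univ.sup' hnem (fun i => |d i|) + 1 with hM
  have hMpos : 0 < M := by
    have h := le_trans (abs_nonneg (d ⟨0, pd.hm⟩))
      (Finset.le_sup' (fun i => |d i|) (Finset.mem_univ ⟨0, pd.hm⟩))
    rw [hM]; linarith
  have hMd : ∀ i, |d i| ≤ M := by
    intro i
    have h := Finset.le_sup' (fun i => |d i|) (Finset.mem_univ i)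
    rw [hM]; linarith
  have htpos : 0 < min t₀ (ε / M) := lt_min ht₀ (div_pos hεpos hMpos)
  have hfeas : ∀ i, 0 ≤ ls i + min t₀ (ε / M) * d i := by
    intro i
    rcases hεlb i with h0 | hεi
    · rw [h0, zero_add]
      exact mul_nonneg htpos.le (hdnn i h0)
    · have h1 : min t₀ (ε / M) * |d i| ≤ (ε / M) * M :=
        mul_le_mul (min_le_right _ _) (hMd i) (abs_nonneg _) (div_nonneg hεpos.le hMpos.le)
      rw [div_mul_cancel₀ _ (ne_of_gt hMpos)] at h1
      have h2 := mul_le_mul_of_nonneg_left (neg_abs_le (d i)) htpos.le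
      linarith
  have hdec := hexact (min t₀ (ε / M)) htpos.le (min_le_left _ _)
  have hlt : dualObj pd pd.p pd.b (fun i => ls i + min t₀ (ε / M) * d i)
      < dualObj pd pd.p pd.b ls := by
    rw [hdec]
    nlinarith [mul_pos htpos (neg_pos.mpr hFdneg)]
  exact absurd (hls.2 _ hfeas) (not_le.mpr hlt)

lemma dual_vanish (pd : ProblemData m n) (ystar : Fin n → ℝ)
    (hyo : IsOptimal pd pd.p pd.b ystar) {lam : Fin m → ℝ} (hlam : lam ∈ Dstar pd)
    (i : Fin m) (hi : i ∉ bindingSetOf pd pd.p pd.b ystar) : lam i = 0 := by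
  classical
  obtain ⟨ls, hls⟩ := exists_dual_min pd
  obtain ⟨s, hs01, hsδ, hsle, hseq⟩ := exists_primal_cert pd ls hls
  have hfeas_s : Feasible pd pd.p pd.b s := ⟨hs01, fun i => hsle i⟩
  have hobj_s : objective pd pd.p s = dualObj pd pd.p pd.b ls := by
    simp only [objective, dualObj]
    have e2 : ∑ j, pd.p j * pd.μ j * s j
        = ∑ j, pd.p j * (s j * (pd.μ j - ∑ i, pd.c j i * ls i))
          + ∑ j, (pd.p j * s j) * (∑ i, pd.c j i * ls i) := by
      rw [← Finset.sum_add_distrib]; exact Finset.sum_congr rfl fun j _ => by ring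
    rw [e2]
    have e3 : ∑ j, pd.p j * (s j * (pd.μ j - ∑ i, pd.c j i * ls i))
        = ∑ j, pd.p j * max (pd.μ j - ∑ i, pd.c j i * ls i) 0 :=
      Finset.sum_congr rfl fun j _ => by rw [hsδ j]
    have e4 : ∑ j, (pd.p j * s j) * (∑ i, pd.c j i * ls i) = ∑ i, pd.b i * ls i := by
      rw [swap_sum pd (fun j => pd.p j * s j) ls]
      refine Finset.sum_congr rfl fun i _ => ?_
      by_cases h : ls i = 0
      · rw [h]; ring
      · rw [hseq i h]; ring
    rw [e3, e4]; ring
  have hflam : dualObj pd pd.p pd.b lam = dualObj pd pd.p pd.b ls := dstar_eq pd hls hlam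
  have hobj_y : objective pd pd.p s ≤ objective pd pd.p ystar := hyo.2 s hfeas_s
  have hwd : objective pd pd.p ystar ≤ dualObj pd pd.p pd.b lam :=
    weak_duality pd ystar hyo.1 lam hlam.1
  have heq2 : dualObj pd pd.p pd.b lam = objective pd pd.p ystar := by linarith
  have hABsum : (∑ i', lam i' * (pd.b i' - ∑ j, pd.p j * ystar j * pd.c j i'))
      + (∑ j, pd.p j * (max (pd.μ j - ∑ i', pd.c j i' * lam i') 0
          - ystar j * (pd.μ j - ∑ i', pd.c j i' * lam i')))
      = dualObj pd pd.p pd.b lam - objective pd pd.p ystar := by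
    simp only [dualObj, objective]
    have hA : ∑ i', lam i' * (pd.b i' - ∑ j, pd.p j * ystar j * pd.c j i')
        = ∑ i', pd.b i' * lam i' - ∑ i', lam i' * (∑ j, (pd.p j * ystar j) * pd.c j i') := by
      rw [← Finset.sum_sub_distrib]
      exact Finset.sum_congr rfl fun i' _ => by ring
    have hB : ∑ j, pd.p j * (max (pd.μ j - ∑ i', pd.c j i' * lam i') 0
        - ystar j * (pd.μ j - ∑ i', pd.c j i' * lam i'))
        = ∑ j, pd.p j * max (pd.μ j - ∑ i', pd.c j i' * lam i') 0
          - (∑ j, pd.p j * pd.μ j * ystar j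
            - ∑ j, (pd.p j * ystar j) * (∑ i', pd.c j i' * lam i')) := by
      rw [← Finset.sum_sub_distrib, ← Finset.sum_sub_distrib]
      exact Finset.sum_congr rfl fun j _ => by ring
    rw [hA, hB, ← swap_sum pd (fun j => pd.p j * ystar j) lam]
    ring
  have hA0 : ∀ i' ∈ Finset.univ, (0:ℝ) ≤ lam i' * (pd.b i' - ∑ j, pd.p j * ystar j * pd.c j i') :=
    fun i' _ => mul_nonneg (hlam.1 i') (sub_nonneg.mpr (hyo.1.2 i'))
  have hB0 : (0:ℝ) ≤ ∑ j, pd.p j * (max (pd.μ j - ∑ i', pd.c j i' * lam i') 0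
      - ystar j * (pd.μ j - ∑ i', pd.c j i' * lam i')) := by
    apply Finset.sum_nonneg
    intro j _
    apply mul_nonneg (pd.hp_pos j).le
    have h := mul_le_max (x := pd.μ j - ∑ i', pd.c j i' * lam i') (hyo.1.1 j).1 (hyo.1.1 j).2
    linarith
  have hAeq0 : ∑ i', lam i' * (pd.b i' - ∑ j, pd.p j * ystar j * pd.c j i') = 0 := by
    have hge := Finset.sum_nonneg hA0
    linarith
  have hterm := (Finset.sum_eq_zero_iff_of_nonneg hA0).mp hAeq0 i (Finset.mem_univ i)
  have hne : ∑ j, pd.p j * ystar j * pd.c j i ≠ pd.b i := hi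
  have hslack : 0 < pd.b i - ∑ j, pd.p j * ystar j * pd.c j i :=
    sub_pos.mpr (lt_of_le_of_ne (hyo.1.2 i) hne)
  rcases mul_eq_zero.mp hterm with h | h
  · exact h
  · exfalso; linarith

lemma star_est (pd : ProblemData m n) (ystar : Fin n → ℝ) (L : ℝ)
    (bhat : Fin m → ℝ) (phat : Fin n → ℝ)
    (hB : ∀ i ∈ bindingSetOf pd pd.p pd.b ystar, |bhat i - pd.b i| ≤ L)
    (hN : ∀ i ∉ bindingSetOf pd pd.p pd.b ystar, pd.b i - L ≤ bhat i)
    (hp : ∀ j, |phat j - pd.p j| ≤ L)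
    (lamh : Fin m → ℝ) (hopt : IsDualOptimal pd phat bhat lamh)
    (lamb : Fin m → ℝ) (hlamb : ∀ i, 0 ≤ lamb i)
    (hbar0 : ∀ i ∉ bindingSetOf pd pd.p pd.b ystar, lamb i = 0) :
    dualObj pd pd.p pd.b lamh
      ≤ dualObj pd pd.p pd.b lamb + L * (1 + n) * ∑ i, |lamh i - lamb i| := by
  classical
  have hL0 : 0 ≤ L := le_trans (abs_nonneg _) (hp ⟨0, pd.hn⟩)
  have hid : ∀ lam : Fin m → ℝ, dualObj pd pd.p pd.b lam - dualObj pd phat bhat lam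
      = ∑ i, (pd.b i - bhat i) * lam i
        + ∑ j, (pd.p j - phat j) * max (pd.μ j - ∑ i, pd.c j i * lam i) 0 := by
    intro lam
    simp only [dualObj]
    have h1 : ∑ i, (pd.b i - bhat i) * lam i
        = ∑ i, pd.b i * lam i - ∑ i, bhat i * lam i := by
      rw [← Finset.sum_sub_distrib]; exact Finset.sum_congr rfl fun i _ => by ring
    have h2 : ∑ j, (pd.p j - phat j) * max (pd.μ j - ∑ i, pd.c j i * lam i) 0
        = ∑ j, pd.p j * max (pd.μ j - ∑ i, pd.c j i * lam i) 0
          - ∑ j, phat j * max (pd.μ j - ∑ i, pd.c j i * lam i) 0 := by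
      rw [← Finset.sum_sub_distrib]; exact Finset.sum_congr rfl fun j _ => by ring
    rw [h1, h2]; ring
  have hopt2 : dualObj pd phat bhat lamh ≤ dualObj pd phat bhat lamb := hopt.2 lamb hlamb
  have hEb : ∑ i, (pd.b i - bhat i) * lamh i - ∑ i, (pd.b i - bhat i) * lamb i
      ≤ L * ∑ i, |lamh i - lamb i| := by
    rw [← Finset.sum_sub_distrib, Finset.mul_sum]
    apply Finset.sum_le_sum
    intro i _
    have hterm : (pd.b i - bhat i) * lamh i - (pd.b i - bhat i) * lamb i
        = (pd.b i - bhat i) * (lamh i - lamb i) := by ring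
    rw [hterm]
    by_cases hiB : i ∈ bindingSetOf pd pd.p pd.b ystar
    · have h1 : |pd.b i - bhat i| ≤ L := by rw [abs_sub_comm]; exact hB i hiB
      calc (pd.b i - bhat i) * (lamh i - lamb i)
          ≤ |(pd.b i - bhat i) * (lamh i - lamb i)| := le_abs_self _
        _ = |pd.b i - bhat i| * |lamh i - lamb i| := abs_mul _ _
        _ ≤ L * |lamh i - lamb i| := mul_le_mul_of_nonneg_right h1 (abs_nonneg _)
    · have h0 : lamb i = 0 := hbar0 i hiB
      have h1 : pd.b i - bhat i ≤ L := by have := hN i hiB; linarith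
      have h2 : 0 ≤ lamh i := hopt.1 i
      rw [h0, sub_zero, abs_of_nonneg h2]
      nlinarith
  have hpb : ∑ j, (pd.p j - phat j) * max (pd.μ j - ∑ i, pd.c j i * lamh i) 0
      - ∑ j, (pd.p j - phat j) * max (pd.μ j - ∑ i, pd.c j i * lamb i) 0
      ≤ (n : ℝ) * (L * ∑ i, |lamh i - lamb i|) := by
    rw [← Finset.sum_sub_distrib]
    have hle : ∀ j ∈ Finset.univ,
        (pd.p j - phat j) * max (pd.μ j - ∑ i, pd.c j i * lamh i) 0
        - (pd.p j - phat j) * max (pd.μ j - ∑ i, pd.c j i * lamb i) 0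
        ≤ L * ∑ i, |lamh i - lamb i| := by
      intro j _
      have h1 : |pd.p j - phat j| ≤ L := by rw [abs_sub_comm]; exact hp j
      have h4 : |(pd.μ j - ∑ i, pd.c j i * lamh i) - (pd.μ j - ∑ i, pd.c j i * lamb i)|
          ≤ ∑ i, |lamh i - lamb i| := by
        have e : (pd.μ j - ∑ i, pd.c j i * lamh i) - (pd.μ j - ∑ i, pd.c j i * lamb i)
            = ∑ i, pd.c j i * (lamb i - lamh i) := by
          have e2 : ∑ i, pd.c j i * (lamb i - lamh i)
              = ∑ i, pd.c j i * lamb i - ∑ i, pd.c j i * lamh i := by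
            rw [← Finset.sum_sub_distrib]; exact Finset.sum_congr rfl fun i _ => by ring
          rw [e2]; ring
        rw [e]
        calc |∑ i, pd.c j i * (lamb i - lamh i)|
            ≤ ∑ i, |pd.c j i * (lamb i - lamh i)| := Finset.abs_sum_le_sum_abs _ _
          _ ≤ ∑ i, |lamh i - lamb i| := by
            apply Finset.sum_le_sum
            intro i _
            rw [abs_mul]
            have hc := pd.hc j i
            have hac : |pd.c j i| = pd.c j i := abs_of_nonneg hc.1
            have hsw : |lamb i - lamh i| = |lamh i - lamb i| := abs_sub_comm _ _
            rw [hac, hsw]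
            nlinarith [abs_nonneg (lamh i - lamb i)]
      have h2 : |max (pd.μ j - ∑ i, pd.c j i * lamh i) 0
          - max (pd.μ j - ∑ i, pd.c j i * lamb i) 0| ≤ ∑ i, |lamh i - lamb i| :=
        le_trans (abs_max_sub_max_le_abs _ _ _) h4
      have e5 : (pd.p j - phat j) * max (pd.μ j - ∑ i, pd.c j i * lamh i) 0
          - (pd.p j - phat j) * max (pd.μ j - ∑ i, pd.c j i * lamb i) 0
          = (pd.p j - phat j) * (max (pd.μ j - ∑ i, pd.c j i * lamh i) 0
            - max (pd.μ j - ∑ i, pd.c j i * lamb i) 0) := by ring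
      rw [e5]
      calc (pd.p j - phat j) * (max (pd.μ j - ∑ i, pd.c j i * lamh i) 0
            - max (pd.μ j - ∑ i, pd.c j i * lamb i) 0)
          ≤ |(pd.p j - phat j) * (max (pd.μ j - ∑ i, pd.c j i * lamh i) 0
            - max (pd.μ j - ∑ i, pd.c j i * lamb i) 0)| := le_abs_self _
        _ = |pd.p j - phat j| * |max (pd.μ j - ∑ i, pd.c j i * lamh i) 0
            - max (pd.μ j - ∑ i, pd.c j i * lamb i) 0| := abs_mul _ _
        _ ≤ L * ∑ i, |lamh i - lamb i| :=
            mul_le_mul h1 h2 (abs_nonneg _) hL0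
    calc ∑ j, ((pd.p j - phat j) * max (pd.μ j - ∑ i, pd.c j i * lamh i) 0
          - (pd.p j - phat j) * max (pd.μ j - ∑ i, pd.c j i * lamb i) 0)
        ≤ ∑ _j : Fin n, L * ∑ i, |lamh i - lamb i| := Finset.sum_le_sum hle
      _ = (n : ℝ) * (L * ∑ i, |lamh i - lamb i|) := by
          rw [Finset.sum_const, Finset.card_univ, Fintype.card_fin, nsmul_eq_mul]
  have hm1 := hid lamh
  have hm2 := hid lamb
  nlinarith [hm1, hm2, hopt2, hEb, hpb]

end StableAux


set_option maxHeartbeats 1600000 in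
/-- Under dual nondegeneracy there exists a stable-region
constant `L > 0`: for every `(b̂, p̂)` in the region, every optimal solution of
the perturbed dual lies in `D*`. -/
theorem stable_region_exists {m n : ℕ} (pd : ProblemData m n)
    (ystar : Fin n → ℝ) (hy : IsAnalyticCenter pd pd.p pd.b ystar)
    (hnd : DualNondegenerate pd (bindingSetOf pd pd.p pd.b ystar)) :
    ∃ L : ℝ, 0 < L ∧
      StableRegionConst pd (bindingSetOf pd pd.p pd.b ystar) L := by
  classical
  obtain ⟨ls, hls⟩ := exists_dual_min pd
  by_contra hcon
  push_neg at hcon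
  have hex : ∀ k : ℕ, ∃ bhat phat,
      (∀ i ∈ bindingSetOf pd pd.p pd.b ystar, |bhat i - pd.b i| ≤ ((k:ℝ)+1)⁻¹) ∧
      (∀ i ∉ bindingSetOf pd pd.p pd.b ystar, pd.b i - ((k:ℝ)+1)⁻¹ ≤ bhat i) ∧
      (∀ j, |phat j - pd.p j| ≤ ((k:ℝ)+1)⁻¹) ∧
      ∃ lam, IsDualOptimal pd phat bhat lam ∧ lam ∉ Dstar pd := by
    intro k
    have h := hcon ((k:ℝ)+1)⁻¹ (by positivity)
    unfold StableRegionConst at h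
    push_neg at h
    exact h
  choose bh ph hb1 hb2 hp3 lam hopt hnot using hex
  have hcpt : IsCompact (Dstar pd) := dstar_compact pd hls
  have hDne : (Dstar pd).Nonempty := ⟨ls, hls⟩
  have hnear : ∀ k : ℕ, ∃ lb, lb ∈ Dstar pd ∧
      ∀ z ∈ Dstar pd, dist (lam k) lb ≤ dist (lam k) z := by
    intro k
    obtain ⟨lbk, hmem, hmin⟩ := hcpt.exists_isMinOn hDne
      ((continuous_const.dist continuous_id)).continuousOn
    exact ⟨lbk, hmem, fun z hz => isMinOn_iff.mp hmin z hz⟩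
  choose lb hlbD hlbmin using hnear
  have hlb0 : ∀ k i, 0 ≤ lb k i := fun k => (hlbD k).1
  have hlbN : ∀ k, ∀ i ∉ bindingSetOf pd pd.p pd.b ystar, lb k i = 0 :=
    fun k i hi => dual_vanish pd ystar hy.1 (hlbD k) i hi
  have hSpos : ∀ k, 0 < ∑ i, |lam k i - lb k i| := by
    intro k
    rcases (Finset.sum_nonneg (fun i (_ : i ∈ Finset.univ) =>
        abs_nonneg (lam k i - lb k i))).lt_or_eq with h | h
    · exact h
    · exfalso
      apply hnot k
      have hz : ∀ i ∈ Finset.univ, |lam k i - lb k i| = 0 :=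
        (Finset.sum_eq_zero_iff_of_nonneg (fun i _ => abs_nonneg _)).mp h.symm
      have heq : lam k = lb k := funext fun i => by
        have h1 := hz i (Finset.mem_univ i)
        have h2 := abs_eq_zero.mp h1
        linarith
      rw [heq]
      exact hlbD k
  have hFdir : ∀ k : ℕ, FdirP pd (patv pd (lb k))
      (fun i => (lam k i - lb k i) / (∑ i', |lam k i' - lb k i'|))
      ≤ ((k:ℝ)+1)⁻¹ * (1 + (n:ℝ)) := by
    intro k
    set S := ∑ i', |lam k i' - lb k i'| with hSdef
    have hSp : 0 < S := hSpos k
    have hSne : S ≠ 0 := ne_of_gt hSp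
    obtain ⟨t₀, ht₀, hexact⟩ := exact_dir pd (lb k) (fun i => (lam k i - lb k i) / S)
    have htpos : 0 < min t₀ S := lt_min ht₀ hSp
    have h1 := hexact (min t₀ S) htpos.le (min_le_left _ _)
    have hcomb : (fun i => lb k i + min t₀ S * ((lam k i - lb k i) / S))
        = (fun i => (1 - min t₀ S / S) * lb k i + (min t₀ S / S) * lam k i) := by
      funext i
      field_simp
      ring
    rw [hcomb] at h1
    have hdivle : min t₀ S / S ≤ 1 := div_le_one_of_le₀ (min_le_right _ _) hSp.le
    have hseg := seg_ineq pd pd.p pd.b (fun j => (pd.hp_pos j).le) (lb k) (lam k)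
      (a := 1 - min t₀ S / S) (b := min t₀ S / S)
      (by linarith) (by positivity) (by ring)
    have hstar := star_est pd ystar (((k:ℝ)+1)⁻¹) (bh k) (ph k) (hb1 k) (hb2 k) (hp3 k)
      (lam k) (hopt k) (lb k) (hlb0 k) (hlbN k)
    have hc1 : min t₀ S * FdirP pd (patv pd (lb k)) (fun i => (lam k i - lb k i) / S)
        ≤ (min t₀ S / S) * (dualObj pd pd.p pd.b (lam k) - dualObj pd pd.p pd.b (lb k)) := by
      nlinarith [h1, hseg]
    have hc2 : (min t₀ S / S) * (dualObj pd pd.p pd.b (lam k) - dualObj pd pd.p pd.b (lb k))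
        ≤ (min t₀ S / S) * (((k:ℝ)+1)⁻¹ * (1 + (n:ℝ)) * S) := by
      apply mul_le_mul_of_nonneg_left _ (by positivity)
      linarith [hstar]
    have hc3 : (min t₀ S / S) * (((k:ℝ)+1)⁻¹ * (1 + (n:ℝ)) * S)
        = min t₀ S * (((k:ℝ)+1)⁻¹ * (1 + (n:ℝ))) := by
      field_simp
    have hfin : min t₀ S * FdirP pd (patv pd (lb k)) (fun i => (lam k i - lb k i) / S)
        ≤ min t₀ S * (((k:ℝ)+1)⁻¹ * (1 + (n:ℝ))) := by linarith
    exact le_of_mul_le_mul_left hfin htpos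
  set pat2 : ℕ → ((Fin n → Fin 3) × (Fin m → Bool)) :=
    fun k => (patv pd (lb k), fun i => decide (lb k i = 0)) with hpat2
  obtain ⟨P, hPinf⟩ := Finite.exists_infinite_fiber pat2
  have hPinf' : {k : ℕ | pat2 k = P}.Infinite := Set.infinite_coe_iff.mp hPinf
  have hφmono : StrictMono (Nat.nth fun k => pat2 k = P) := Nat.nth_strictMono hPinf'
  have hφmem : ∀ k, pat2 (Nat.nth (fun k => pat2 k = P) k) = P :=
    fun k => Nat.nth_mem_of_infinite hPinf' k
  set φ : ℕ → ℕ := Nat.nth fun k => pat2 k = P with hφ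
  have hSphcpt : IsCompact {d : Fin m → ℝ | ∑ i, |d i| = 1} := by
    apply IsCompact.of_isClosed_subset (isCompact_closedBall (0 : Fin m → ℝ) 1)
    · exact isClosed_eq (continuous_finset_sum _ fun i _ => (continuous_apply i).abs)
        continuous_const
    · intro x hx
      rw [Metric.mem_closedBall, dist_pi_le_iff zero_le_one]
      intro i
      rw [Real.dist_eq, Pi.zero_apply, sub_zero]
      have h1 : |x i| ≤ ∑ i', |x i'| :=
        Finset.single_le_sum (f := fun i' => |x i'|) (fun i' _ => abs_nonneg _)
          (Finset.mem_univ i)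
      have h2 : ∑ i', |x i'| = 1 := hx
      linarith
  have hmem : ∀ k : ℕ, (fun i => (lam (φ k) i - lb (φ k) i)
      / (∑ i', |lam (φ k) i' - lb (φ k) i'|)) ∈ {d : Fin m → ℝ | ∑ i, |d i| = 1} := by
    intro k
    have hS := hSpos (φ k)
    simp only [Set.mem_setOf_eq]
    have habs : ∀ i, |(lam (φ k) i - lb (φ k) i) / (∑ i', |lam (φ k) i' - lb (φ k) i'|)|
        = |lam (φ k) i - lb (φ k) i| / (∑ i', |lam (φ k) i' - lb (φ k) i'|) := by
      intro i; rw [abs_div, abs_of_pos hS]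
    rw [Finset.sum_congr rfl fun i _ => habs i, ← Finset.sum_div]
    exact div_self (ne_of_gt hS)
  obtain ⟨dl, hdlSph, ψ, hψmono, htend⟩ := hSphcpt.tendsto_subseq hmem
  have hcontF : Continuous (FdirP pd P.1) := by
    apply Continuous.add
    · exact continuous_finset_sum _ fun i _ => continuous_const.mul (continuous_apply i)
    · apply continuous_finset_sum
      intro j _
      apply Continuous.mul continuous_const
      by_cases hc2 : P.1 j = 2
      · simp only [if_pos hc2]
        exact (continuous_finset_sum _ fun i _ => continuous_const.mul (continuous_apply i)).neg
      · simp only [if_neg hc2]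
        by_cases hc1 : P.1 j = 1
        · simp only [if_pos hc1]
          exact ((continuous_finset_sum _ fun i _ =>
            continuous_const.mul (continuous_apply i)).neg).max continuous_const
        · simp only [if_neg hc1]
          exact continuous_const
  have hd1 : FdirP pd P.1 dl ≤ 0 := by
    have htend2 := Filter.Tendsto.comp (hcontF.continuousAt (x := dl)) htend
    have hb : ∀ k : ℕ, FdirP pd P.1 (fun i => (lam (φ (ψ k)) i - lb (φ (ψ k)) i)
        / (∑ i', |lam (φ (ψ k)) i' - lb (φ (ψ k)) i'|)) ≤ (1 + (n:ℝ)) * ((k:ℝ)+1)⁻¹ := by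
      intro k
      have h1 := hFdir (φ (ψ k))
      have hfst : patv pd (lb (φ (ψ k))) = P.1 := congrArg Prod.fst (hφmem (ψ k))
      rw [hfst] at h1
      have h2 : (k:ℝ) + 1 ≤ (φ (ψ k) : ℝ) + 1 := by
        have h3 : k ≤ φ (ψ k) := (hφmono.comp hψmono).le_apply
        have h4 : (k:ℝ) ≤ (φ (ψ k) : ℝ) := by exact_mod_cast h3
        linarith
      have h3 : ((φ (ψ k):ℝ)+1)⁻¹ ≤ ((k:ℝ)+1)⁻¹ := by
        apply inv_anti₀ (by positivity) h2
      calc FdirP pd P.1 (fun i => (lam (φ (ψ k)) i - lb (φ (ψ k)) i)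
            / (∑ i', |lam (φ (ψ k)) i' - lb (φ (ψ k)) i'|))
          ≤ ((φ (ψ k):ℝ)+1)⁻¹ * (1 + (n:ℝ)) := h1
        _ ≤ ((k:ℝ)+1)⁻¹ * (1 + (n:ℝ)) := by
            apply mul_le_mul_of_nonneg_right h3 (by positivity)
        _ = (1 + (n:ℝ)) * ((k:ℝ)+1)⁻¹ := by ring
    have hzero : Filter.Tendsto (fun k : ℕ => (1 + (n:ℝ)) * ((k:ℝ)+1)⁻¹)
        Filter.atTop (nhds 0) := by
      have h0 := tendsto_one_div_add_atTop_nhds_zero_nat (𝕜 := ℝ)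
      have h2 : (fun k : ℕ => (1 + (n:ℝ)) * ((k:ℝ)+1)⁻¹)
          = fun k : ℕ => (1 + (n:ℝ)) * (1 / ((k:ℝ)+1)) := by
        funext k; rw [one_div]
      rw [h2]
      simpa using h0.const_mul (1 + (n:ℝ))
    exact le_of_tendsto_of_tendsto' htend2 hzero hb
  have hd2 : ∀ i, P.2 i = true → 0 ≤ dl i := by
    intro i hP2
    have hco := (tendsto_pi_nhds.mp htend) i
    apply ge_of_tendsto hco
    apply Filter.Eventually.of_forall
    intro k
    have hzero : lb (φ (ψ k)) i = 0 := by
      have hthis := congrFun (congrArg Prod.snd (hφmem (ψ k))) i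
      rw [hP2] at hthis
      exact of_decide_eq_true hthis
    show 0 ≤ (lam (φ (ψ k)) i - lb (φ (ψ k)) i) / (∑ i', |lam (φ (ψ k)) i' - lb (φ (ψ k)) i'|)
    apply div_nonneg _ (hSpos (φ (ψ k))).le
    rw [hzero, sub_zero]
    exact (hopt (φ (ψ k))).1 i
  have hmR : (0:ℝ) < (m:ℝ) := by exact_mod_cast pd.hm
  obtain ⟨K0, hK0⟩ := (Metric.tendsto_atTop.mp htend) ((2*(m:ℝ))⁻¹) (by positivity)
  have hdist := hK0 K0 (le_refl K0)
  set κ := φ (ψ K0) with hκ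
  have hPκ : pat2 κ = P := hφmem (ψ K0)
  have hPκ1 : patv pd (lb κ) = P.1 := congrArg Prod.fst hPκ
  have hPκ2 : ∀ i, lb κ i = 0 → P.2 i = true := by
    intro i h0
    have hthis := congrFun (congrArg Prod.snd hPκ) i
    rw [← hthis]
    exact decide_eq_true h0
  obtain ⟨ε, hεpos, hεlb⟩ := pos_lower pd.hm (lb κ) (hlb0 κ)
  obtain ⟨t₁, ht₁, hex₁⟩ := exact_dir pd (lb κ) dl
  set S := ∑ i', |lam κ i' - lb κ i'| with hS
  have hSp : 0 < S := hSpos κ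
  set r := dist (lam κ) (lb κ) with hr
  have hrS : S ≤ (m:ℝ) * r := by
    have h1 : ∀ i ∈ Finset.univ, |lam κ i - lb κ i| ≤ r := by
      intro i _
      have hthis := dist_le_pi_dist (lam κ) (lb κ) i
      rwa [Real.dist_eq] at hthis
    calc S ≤ ∑ _i : Fin m, r := Finset.sum_le_sum h1
      _ = (m:ℝ) * r := by
          rw [Finset.sum_const, Finset.card_univ, Fintype.card_fin, nsmul_eq_mul]
  set t := min (min t₁ ε) S with ht
  have htpos : 0 < t := lt_min (lt_min ht₁ hεpos) hSp
  have hdl1 : ∀ i, |dl i| ≤ 1 := by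
    intro i
    have h1 : |dl i| ≤ ∑ i', |dl i'| :=
      Finset.single_le_sum (f := fun i' => |dl i'|) (fun i' _ => abs_nonneg _)
        (Finset.mem_univ i)
    have h2 : ∑ i', |dl i'| = 1 := hdlSph
    linarith
  have hz0 : ∀ i, 0 ≤ lb κ i + t * dl i := by
    intro i
    rcases hεlb i with h0 | hεi
    · rw [h0, zero_add]
      exact mul_nonneg htpos.le (hd2 i (hPκ2 i h0))
    · have htε : t ≤ ε := le_trans (min_le_left _ _) (min_le_right _ _)
      have h1 : t * |dl i| ≤ ε := by
        have hthis := mul_le_mul htε (hdl1 i) (abs_nonneg _) hεpos.le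
        linarith
      have h2 := mul_le_mul_of_nonneg_left (neg_abs_le (dl i)) htpos.le
      linarith
  have hzval : dualObj pd pd.p pd.b (fun i => lb κ i + t * dl i)
      ≤ dualObj pd pd.p pd.b (lb κ) := by
    have h1 := hex₁ t htpos.le (le_trans (min_le_left _ _) (min_le_left _ _))
    rw [hPκ1] at h1
    have h2 : t * FdirP pd P.1 dl ≤ 0 := mul_nonpos_of_nonneg_of_nonpos htpos.le hd1
    linarith
  have hzD : (fun i => lb κ i + t * dl i) ∈ Dstar pd := by
    refine ⟨hz0, fun l' hl' => ?_⟩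
    exact le_trans hzval ((hlbD κ).2 l' hl')
  have hrle : r ≤ dist (lam κ) (fun i => lb κ i + t * dl i) := hlbmin κ _ hzD
  have htS : t ≤ S := min_le_right _ _
  have hdivle : t / S ≤ 1 := div_le_one_of_le₀ htS hSp.le
  have hub : dist (lam κ) (fun i => lb κ i + t * dl i) ≤ r - t / (2*(m:ℝ)) := by
    have hr0 : 0 ≤ r := dist_nonneg
    have hSne : S ≠ 0 := ne_of_gt hSp
    have hnn : 0 ≤ r - t / (2*(m:ℝ)) := by
      have hc : t / (2*(m:ℝ)) ≤ ((m:ℝ)*r) / (2*(m:ℝ)) :=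
        (div_le_div_iff_of_pos_right (by positivity)).mpr (le_trans htS hrS)
      have hc2 : ((m:ℝ)*r) / (2*(m:ℝ)) = r/2 := by field_simp
      linarith [hc, hc2.symm ▸ hc]
    rw [dist_pi_le_iff hnn]
    intro i
    show dist (lam κ i) (lb κ i + t * dl i) ≤ r - t / (2*(m:ℝ))
    rw [Real.dist_eq]
    have hΔr : |lam κ i - lb κ i| ≤ r := by
      have h := dist_le_pi_dist (lam κ) (lb κ) i
      rwa [Real.dist_eq] at h
    have hdd : |(lam κ i - lb κ i)/S - dl i| ≤ (2*(m:ℝ))⁻¹ := by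
      have h1 := dist_le_pi_dist (fun i' => (lam κ i' - lb κ i')/S) dl i
      rw [Real.dist_eq] at h1
      exact le_trans h1 hdist.le
    have e : lam κ i - (lb κ i + t * dl i)
        = (1 - t/S) * (lam κ i - lb κ i) + t * ((lam κ i - lb κ i)/S - dl i) := by
      field_simp
      ring
    rw [e]
    have habs1 : |(1 - t/S) * (lam κ i - lb κ i)| ≤ (1 - t/S) * r := by
      rw [abs_mul, abs_of_nonneg (by linarith : (0:ℝ) ≤ 1 - t/S)]
      exact mul_le_mul_of_nonneg_left hΔr (by linarith)
    have habs2 : |t * ((lam κ i - lb κ i)/S - dl i)| ≤ t * (2*(m:ℝ))⁻¹ := by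
      rw [abs_mul, abs_of_nonneg htpos.le]
      exact mul_le_mul_of_nonneg_left hdd htpos.le
    have hts : t/(m:ℝ) ≤ (t/S)*r := by
      have h1 : S/(m:ℝ) ≤ r := by
        rw [div_le_iff₀ hmR]
        nlinarith
      have h2 : (t/S)*(S/(m:ℝ)) = t/(m:ℝ) := by
        rw [div_mul_div_comm, mul_comm t S, mul_div_mul_left _ _ hSne]
      rw [← h2]
      exact mul_le_mul_of_nonneg_left h1 (by positivity)
    have e2 : t * (2*(m:ℝ))⁻¹ = t/(2*(m:ℝ)) := by rw [div_eq_mul_inv]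
    have e3 : t/(m:ℝ) = 2 * (t/(2*(m:ℝ))) := by
      field_simp
    have hfinal : (1 - t/S) * r + t * (2*(m:ℝ))⁻¹ ≤ r - t/(2*(m:ℝ)) := by
      linarith [hts, e2, e3]
    calc |(1 - t/S) * (lam κ i - lb κ i) + t * ((lam κ i - lb κ i)/S - dl i)|
        ≤ |(1 - t/S) * (lam κ i - lb κ i)| + |t * ((lam κ i - lb κ i)/S - dl i)| :=
          abs_add_le _ _
      _ ≤ (1 - t/S) * r + t * (2*(m:ℝ))⁻¹ := add_le_add habs1 habs2
      _ ≤ r - t / (2*(m:ℝ)) := hfinal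
  linarith [hrle, hub, htpos, (by positivity : (0:ℝ) < t / (2*(m:ℝ)))]

end FairOnline
end

section
/- Let T ≥ 2 and let K, A₁, A₂, B₁, B₂, C₁, C₂ be positive reals. Suppose (z_t)_{t=1}^T is a sequence of nonnegative reals with z₁ = 0 satisfying, for all 1 ≤ t ≤ T−1, z_{t+1} ≤ z_t + (2/(T−t))·√z_t·( √K/max(√(t−1),1) + sqrt(A₁·e^{−A₂(T−t+1)} + B₁·e^{−B₂ t} + C₁·T^{1/2}·e^{−C₂·T^{1/2}}) ) + 16/(T−t)². Then Σ_{t=1}^T z_t ≤ c·N̄·log(T) for an absolute constant c, where M̄ := 4√K + 2·sqrt(2A₁/(e·A₂) + B₁/(e·B₂) + 27C₁/(e³·C₂³)) and N̄ := 4·max(M̄², 256). -/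
private lemma exp_neg_le_aux {x : ℝ} (hx : 0 < x) :
    Real.exp (-x) ≤ 1 / (Real.exp 1 * x) := by
  have h3 : x ≤ Real.exp (x - 1) := by
    have h2 := Real.add_one_le_exp (x - 1); linarith
  have h1 : Real.exp 1 * x ≤ Real.exp x := by
    calc Real.exp 1 * x ≤ Real.exp 1 * Real.exp (x - 1) :=
          mul_le_mul_of_nonneg_left h3 (Real.exp_pos 1).le
      _ = Real.exp x := by rw [← Real.exp_add]; ring_nf
  rw [Real.exp_neg, one_div]
  exact inv_anti₀ (by positivity) h1

private lemma exp_neg_le_cube_aux {x : ℝ} (hx : 0 < x) :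
    Real.exp (-x) ≤ 27 / (Real.exp 1 ^ 3 * x ^ 3) := by
  have h := exp_neg_le_aux (show 0 < x / 3 by linarith)
  have h0 : Real.exp (-(x/3)) ^ 3 = Real.exp (-x) := by
    rw [← Real.exp_nat_mul]; congr 1; push_cast; ring
  calc Real.exp (-x) = Real.exp (-(x/3)) ^ 3 := h0.symm
    _ ≤ (1/(Real.exp 1 * (x/3))) ^ 3 := pow_le_pow_left₀ (Real.exp_nonneg _) h 3
    _ = 27 / (Real.exp 1 ^ 3 * x ^ 3) := by
        have : Real.exp 1 ≠ 0 := (Real.exp_pos 1).ne'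
        field_simp
        ring

private lemma fracA_aux {e' A₁ A₂ p q u : ℝ} (he : 0 < e') (h1 : 0 < A₁) (h2 : 0 < A₂)
    (hp : 0 < p) (hq : 0 < q) (hu : 0 < u) (hpq : p ≤ 2 * q) :
    A₁ * (1 / (e' * (A₂ * u))) ≤ 2 * A₁ / (e' * A₂) * (q / (p * u)) := by
  rw [mul_one_div, div_mul_div_comm, div_le_div_iff₀ (by positivity) (by positivity)]
  nlinarith [mul_nonneg (show (0:ℝ) ≤ A₁ * e' * A₂ * u by positivity)
    (show (0:ℝ) ≤ 2 * q - p by linarith)]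

private lemma fracB_aux {e' B₁ B₂ p q u : ℝ} (he : 0 < e') (h1 : 0 < B₁) (h2 : 0 < B₂)
    (hp : 0 < p) (hq : 0 < q) (hu : 0 < u) (hpq : u ≤ q) :
    B₁ * (1 / (e' * (B₂ * p))) ≤ B₁ / (e' * B₂) * (q / (p * u)) := by
  rw [mul_one_div, div_mul_div_comm, div_le_div_iff₀ (by positivity) (by positivity)]
  nlinarith [mul_nonneg (show (0:ℝ) ≤ B₁ * e' * B₂ * p by positivity)
    (show (0:ℝ) ≤ q - u by linarith)]

private lemma fracCeq_aux {e' C₁ C₂ w Tr : ℝ} (he : 0 < e') (hC₂ : 0 < C₂) (hw : 0 < w)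
    (hw2 : w ^ 2 = Tr) :
    C₁ * w * (27 / (e' ^ 3 * (C₂ * w) ^ 3)) = 27 * C₁ / (e' ^ 3 * C₂ ^ 3) * (1 / Tr) := by
  have hT : Tr = w ^ 2 := hw2.symm
  subst hT
  field_simp

private lemma prod_eq_aux {a s v w u : ℝ} (hs : s ≠ 0) (hv : v ≠ 0) (hw : w ≠ 0)
    (hu : u ≠ 0) :
    2 / u * (a * s / (v * w)) * (31 / 64 * (a * w / (s * v))) =
      31 / 32 * a ^ 2 / (u * v ^ 2) := by
  field_simp
  ring

private lemma sum_reindex_aux (T : ℕ) :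
    ∑ t ∈ Finset.Icc 1 T, (1:ℝ) / ((T:ℝ) - t + 1) = ∑ s ∈ Finset.Icc 1 T, (1:ℝ) / s := by
  rw [← Finset.Ico_add_one_right_eq_Icc, Finset.sum_Ico_eq_sum_range, Finset.sum_Ico_eq_sum_range]
  simp only [Nat.add_sub_cancel]
  conv_rhs => rw [← Finset.sum_range_reflect]
  apply Finset.sum_congr rfl
  intro j hj
  rw [Finset.mem_range] at hj
  have h1 : 1 + (T - 1 - j) = T - j := by omega
  rw [h1]
  have hjT : j ≤ T := by omega
  have h2 : ((T - j : ℕ) : ℝ) = (T:ℝ) - j := by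
    push_cast [hjT]; ring
  rw [h2]
  congr 1
  push_cast
  ring


private lemma sqrt2_le_aux : Real.sqrt 2 ≤ 3 / 2 := by
  nlinarith [Real.sq_sqrt (show (0:ℝ) ≤ 2 by norm_num), Real.sqrt_nonneg (2:ℝ)]

private lemma sqrt_max_aux {tr : ℝ} (htr1 : 1 ≤ tr) :
    Real.sqrt tr ≤ Real.sqrt 2 * max (Real.sqrt (tr - 1)) 1 := by
  have hmax1 : (1:ℝ) ≤ max (Real.sqrt (tr - 1)) 1 := le_max_right _ _
  rcases le_or_gt tr 2 with h | h
  · have h1 : Real.sqrt tr ≤ Real.sqrt 2 := Real.sqrt_le_sqrt h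
    have h2 : Real.sqrt 2 ≤ Real.sqrt 2 * max (Real.sqrt (tr-1)) 1 :=
      le_mul_of_one_le_right (Real.sqrt_nonneg 2) hmax1
    linarith
  · have h1 : Real.sqrt 2 * Real.sqrt (tr / 2) = Real.sqrt tr := by
      rw [← Real.sqrt_mul (by norm_num : (0:ℝ) ≤ 2),
        show (2:ℝ) * (tr / 2) = tr by ring]
    have h2 : Real.sqrt (tr/2) ≤ Real.sqrt (tr - 1) := Real.sqrt_le_sqrt (by linarith)
    have h3 : Real.sqrt (tr - 1) ≤ max (Real.sqrt (tr-1)) 1 := le_max_left _ _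
    have h4 := Real.sqrt_nonneg (2:ℝ)
    nlinarith

private lemma div_frac_aux {a s v w : ℝ} (ha : 0 ≤ a) (hs : 0 < s) (hv : 0 < v)
    (hw : 0 < w) (hvw : v ≤ w) : a / s ≤ a * w / (s * v) := by
  rw [div_le_div_iff₀ hs (by positivity)]
  nlinarith [mul_nonneg (mul_nonneg ha hs.le) (sub_nonneg.mpr hvw)]

private lemma cross_aux {tr Tr : ℝ} (h1 : 1 ≤ tr) (h2 : tr + 1 ≤ Tr) :
    1 * (tr * (Tr - tr + 1)) ≤ Tr * Tr := by nlinarith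

private lemma h16_aux {u N : ℝ} (hu : 1 ≤ u) (hN : 1024 ≤ N) :
    16 / u ^ 2 ≤ N / 32 / (u * (u + 1)) := by
  rw [div_le_div_iff₀ (by positivity) (by positivity)]
  nlinarith [mul_nonneg (sub_nonneg.mpr hu) (show (0:ℝ) ≤ u by linarith),
    mul_nonneg (show (0:ℝ) ≤ N - 1024 by linarith) (sq_nonneg u)]

private lemma hD_sum_aux {x y R s2 : ℝ} (hx : x ≤ s2 / 8 * R) (hy : y ≤ 1 / 4 * R)
    (hR : 0 ≤ R) (hs2 : s2 ≤ 3 / 2) : x + y ≤ 31 / 64 * R := by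
  nlinarith [mul_nonneg (show (0:ℝ) ≤ 31/64 - (s2/8 + 1/4) by linarith) hR]

private lemma hzle_aux {N tr Tr : ℝ} (hN : 0 ≤ N) (h1 : 1 ≤ tr) (hT : tr ≤ Tr)
    (hT0 : 0 < Tr) : N * tr / ((Tr - tr + 1) * Tr) ≤ N * (1 / (Tr - tr + 1)) := by
  have hd : 0 < Tr - tr + 1 := by linarith
  rw [mul_one_div, div_le_div_iff₀ (mul_pos hd hT0) hd]
  nlinarith [mul_nonneg (mul_nonneg hN hd.le) (sub_nonneg.mpr hT)]

private lemma final_log_aux {N L : ℝ} (hN : 0 ≤ N) (hL : 1/2 ≤ L) :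
    N * (1 + L) ≤ 3 * N * L := by nlinarith

set_option maxHeartbeats 1600000 in
/-- Deterministic sequence lemma: any nonnegative sequence
`z` with `z₁ = 0` satisfying the perturbed discrete recursion has
`∑_{t=1}^T z_t ≤ c·N̄·log T` for an absolute constant `c`, where
`M̄ = 4√K + 2√(2A₁/(eA₂) + B₁/(eB₂) + 27C₁/(e³C₂³))` and
`N̄ = 4·max(M̄², 256)`. -/
theorem sequence_recursion_log_bound :
    ∃ c : ℝ, 0 < c ∧
      ∀ (T : ℕ), 2 ≤ T →
      ∀ K A₁ A₂ B₁ B₂ C₁ C₂ : ℝ,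
        0 < K → 0 < A₁ → 0 < A₂ → 0 < B₁ → 0 < B₂ → 0 < C₁ → 0 < C₂ →
      ∀ z : ℕ → ℝ, (∀ t, 0 ≤ z t) → z 1 = 0 →
      (∀ t : ℕ, 1 ≤ t → t ≤ T - 1 →
        z (t + 1) ≤ z t + (2 / ((T : ℝ) - (t : ℝ))) * Real.sqrt (z t) *
          (Real.sqrt K / max (Real.sqrt ((t : ℝ) - 1)) 1 +
           Real.sqrt (A₁ * Real.exp (-A₂ * ((T : ℝ) - (t : ℝ) + 1)) +
             B₁ * Real.exp (-B₂ * (t : ℝ)) +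
             C₁ * Real.sqrt T * Real.exp (-C₂ * Real.sqrt T)))
          + 16 / ((T : ℝ) - (t : ℝ)) ^ 2) →
      ∑ t ∈ Finset.Icc 1 T, z t ≤
        c * (4 * max ((4 * Real.sqrt K +
              2 * Real.sqrt (2 * A₁ / (Real.exp 1 * A₂) +
                B₁ / (Real.exp 1 * B₂) +
                27 * C₁ / (Real.exp 1 ^ 3 * C₂ ^ 3))) ^ 2) 256) *
          Real.log T := by
  refine ⟨3, by norm_num, ?_⟩
  intro T hT K A₁ A₂ B₁ B₂ C₁ C₂ hK hA₁ hA₂ hB₁ hB₂ hC₁ hC₂ z hz hz1 hrec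
  have he : (0:ℝ) < Real.exp 1 := Real.exp_pos 1
  set Q : ℝ := 2 * A₁ / (Real.exp 1 * A₂) + B₁ / (Real.exp 1 * B₂) +
      27 * C₁ / (Real.exp 1 ^ 3 * C₂ ^ 3) with hQdef
  have hQ0 : 0 < Q := by positivity
  set M : ℝ := 4 * Real.sqrt K + 2 * Real.sqrt Q with hMdef
  have hM0 : 0 < M := by positivity
  set N : ℝ := 4 * max (M ^ 2) 256 with hNdef
  have hN1024 : (1024:ℝ) ≤ N := by
    have h := le_max_right (M^2) (256:ℝ)
    rw [hNdef]; linarith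
  have hN0 : (0:ℝ) ≤ N := by linarith
  set a : ℝ := Real.sqrt N with hadef
  have haN : a ^ 2 = N := Real.sq_sqrt hN0
  have ha0 : 0 ≤ a := Real.sqrt_nonneg _
  have h2Ma : 2 * M ≤ a := by
    have h1 : (2*M)^2 ≤ N := by
      have h := le_max_left (M^2) (256:ℝ)
      rw [hNdef]; nlinarith
    calc 2*M = Real.sqrt ((2*M)^2) := (Real.sqrt_sq (by linarith)).symm
      _ ≤ a := Real.sqrt_le_sqrt h1
  have hsqK : Real.sqrt K ≤ M / 4 := by
    have h := Real.sqrt_nonneg Q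
    rw [hMdef]; linarith
  have hsqQ : Real.sqrt Q ≤ M / 2 := by
    have h := Real.sqrt_nonneg K
    rw [hMdef]; linarith
  have hTr2 : (2:ℝ) ≤ (T:ℝ) := by exact_mod_cast hT
  have hT0 : (0:ℝ) < (T:ℝ) := by linarith
  -- main induction
  have key : ∀ t : ℕ, 1 ≤ t → t ≤ T →
      z t ≤ N * t / (((T:ℝ) - t + 1) * T) := by
    intro t ht
    induction t, ht using Nat.le_induction with
    | base =>
      intro _
      rw [hz1]
      have hden : (((T:ℝ) - (1:ℕ) + 1) * T) = (T:ℝ) * T := by push_cast; ring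
      rw [hden]
      exact div_nonneg (mul_nonneg hN0 (by norm_num)) (mul_self_nonneg _)
    | succ t ht ih =>
      intro hle
      have ihz := ih (by omega)
      have hrec' := hrec t ht (by omega)
      have htr1 : (1:ℝ) ≤ (t:ℝ) := by exact_mod_cast ht
      have htrT : (t:ℝ) + 1 ≤ (T:ℝ) := by exact_mod_cast hle
      set Tr := (T:ℝ) with hTrdef
      set tr := (t:ℝ) with htrdef
      have hu0 : (0:ℝ) < Tr - tr := by linarith
      have hu1 : (1:ℝ) ≤ Tr - tr := by linarith
      have huv0 : (0:ℝ) < Tr - tr + 1 := by linarith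
      have htr0 : (0:ℝ) < tr := by linarith
      set s := Real.sqrt tr with hsdef
      set w := Real.sqrt Tr with hwdef
      set v := Real.sqrt (Tr - tr + 1) with hvdef
      have hs0 : 0 < s := Real.sqrt_pos.mpr htr0
      have hw0 : 0 < w := Real.sqrt_pos.mpr hT0
      have hv0 : 0 < v := Real.sqrt_pos.mpr huv0
      have hs2 : s ^ 2 = tr := Real.sq_sqrt htr0.le
      have hw2 : w ^ 2 = Tr := Real.sq_sqrt hT0.le
      have hv2 : v ^ 2 = Tr - tr + 1 := Real.sq_sqrt huv0.le
      have hvw : v ≤ w := Real.sqrt_le_sqrt (by linarith)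
      have hwv1 : (1:ℝ) ≤ w / v := (one_le_div hv0).mpr hvw
      -- bound on the bracket D
      have hmax1 : (1:ℝ) ≤ max (Real.sqrt (tr - 1)) 1 := le_max_right _ _
      have hmax0 : (0:ℝ) < max (Real.sqrt (tr - 1)) 1 := lt_of_lt_of_le one_pos hmax1
      have hsmax : s ≤ Real.sqrt 2 * max (Real.sqrt (tr - 1)) 1 := sqrt_max_aux htr1
      have hterm1 : Real.sqrt K / max (Real.sqrt (tr - 1)) 1 ≤
          Real.sqrt 2 / 8 * (a * w / (s * v)) := by
        have hinvmax : 1 / max (Real.sqrt (tr-1)) 1 ≤ Real.sqrt 2 / s := by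
          rw [div_le_div_iff₀ hmax0 hs0]
          linarith [hsmax]
        have hc1 : Real.sqrt K / max (Real.sqrt (tr - 1)) 1 ≤ (M/4) * (Real.sqrt 2 / s) := by
          rw [div_eq_mul_one_div]
          exact mul_le_mul hsqK hinvmax (by positivity) (by linarith)
        have hc2 : (M/4) * (Real.sqrt 2 / s) ≤ (a/8) * (Real.sqrt 2 / s) :=
          mul_le_mul_of_nonneg_right (by linarith) (by positivity)
        have hc3 : (a/8) * (Real.sqrt 2 / s) = Real.sqrt 2 / 8 * (a / s) := by ring
        have hc4 : a / s ≤ a * w / (s * v) := div_frac_aux ha0 hs0 hv0 hw0 hvw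
        have hc5 : Real.sqrt 2 / 8 * (a / s) ≤ Real.sqrt 2 / 8 * (a * w / (s * v)) :=
          mul_le_mul_of_nonneg_left hc4 (by positivity)
        linarith
      have hE : A₁ * Real.exp (-A₂ * (Tr - tr + 1)) + B₁ * Real.exp (-B₂ * tr) +
          C₁ * w * Real.exp (-C₂ * w) ≤ Q * (Tr / (tr * (Tr - tr + 1))) := by
        have hA : A₁ * Real.exp (-A₂ * (Tr - tr + 1)) ≤
            2 * A₁ / (Real.exp 1 * A₂) * (Tr / (tr * (Tr - tr + 1))) := by
          have h1 : Real.exp (-A₂ * (Tr - tr + 1)) ≤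
              1 / (Real.exp 1 * (A₂ * (Tr - tr + 1))) := by
            rw [show -A₂ * (Tr - tr + 1) = -(A₂ * (Tr - tr + 1)) by ring]
            exact exp_neg_le_aux (by positivity)
          calc A₁ * Real.exp (-A₂ * (Tr - tr + 1))
              ≤ A₁ * (1 / (Real.exp 1 * (A₂ * (Tr - tr + 1)))) :=
                mul_le_mul_of_nonneg_left h1 hA₁.le
            _ ≤ _ := fracA_aux he hA₁ hA₂ htr0 hT0 huv0 (by linarith)
        have hB : B₁ * Real.exp (-B₂ * tr) ≤
            B₁ / (Real.exp 1 * B₂) * (Tr / (tr * (Tr - tr + 1))) := by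
          have h1 : Real.exp (-B₂ * tr) ≤ 1 / (Real.exp 1 * (B₂ * tr)) := by
            rw [show -B₂ * tr = -(B₂ * tr) by ring]
            exact exp_neg_le_aux (by positivity)
          calc B₁ * Real.exp (-B₂ * tr)
              ≤ B₁ * (1 / (Real.exp 1 * (B₂ * tr))) := mul_le_mul_of_nonneg_left h1 hB₁.le
            _ ≤ _ := fracB_aux he hB₁ hB₂ htr0 hT0 huv0 (by linarith)
        have hC : C₁ * w * Real.exp (-C₂ * w) ≤
            27 * C₁ / (Real.exp 1 ^ 3 * C₂ ^ 3) * (Tr / (tr * (Tr - tr + 1))) := by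
          have h1 : Real.exp (-C₂ * w) ≤ 27 / (Real.exp 1 ^ 3 * (C₂ * w) ^ 3) := by
            rw [show -C₂ * w = -(C₂ * w) by ring]
            exact exp_neg_le_cube_aux (by positivity)
          calc C₁ * w * Real.exp (-C₂ * w)
              ≤ C₁ * w * (27 / (Real.exp 1 ^ 3 * (C₂ * w) ^ 3)) :=
                mul_le_mul_of_nonneg_left h1 (by positivity)
            _ = 27 * C₁ / (Real.exp 1 ^ 3 * C₂ ^ 3) * (1 / Tr) :=
                fracCeq_aux he hC₂ hw0 hw2
            _ ≤ 27 * C₁ / (Real.exp 1 ^ 3 * C₂ ^ 3) * (Tr / (tr * (Tr - tr + 1))) := by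
                apply mul_le_mul_of_nonneg_left _ (by positivity)
                rw [div_le_div_iff₀ hT0 (by positivity)]
                exact cross_aux htr1 htrT
        have hQX : Q * (Tr / (tr * (Tr - tr + 1))) =
            2 * A₁ / (Real.exp 1 * A₂) * (Tr / (tr * (Tr - tr + 1))) +
            B₁ / (Real.exp 1 * B₂) * (Tr / (tr * (Tr - tr + 1))) +
            27 * C₁ / (Real.exp 1 ^ 3 * C₂ ^ 3) * (Tr / (tr * (Tr - tr + 1))) := by
          rw [hQdef]; ring
        linarith
      have hterm2 : Real.sqrt (A₁ * Real.exp (-A₂ * (Tr - tr + 1)) +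
          B₁ * Real.exp (-B₂ * tr) + C₁ * w * Real.exp (-C₂ * w)) ≤
          1 / 4 * (a * w / (s * v)) := by
        calc Real.sqrt (A₁ * Real.exp (-A₂ * (Tr - tr + 1)) +
              B₁ * Real.exp (-B₂ * tr) + C₁ * w * Real.exp (-C₂ * w))
            ≤ Real.sqrt (Q * (Tr / (tr * (Tr - tr + 1)))) := Real.sqrt_le_sqrt hE
          _ = Real.sqrt Q * (w / (s * v)) := by
              rw [Real.sqrt_mul hQ0.le, Real.sqrt_div hT0.le, Real.sqrt_mul htr0.le]
          _ ≤ (M/2) * (w / (s * v)) := mul_le_mul_of_nonneg_right hsqQ (by positivity)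
          _ ≤ (a/4) * (w / (s * v)) := mul_le_mul_of_nonneg_right (by linarith) (by positivity)
          _ = 1 / 4 * (a * w / (s * v)) := by ring
      have hsqrt2 : Real.sqrt 2 ≤ 3/2 := sqrt2_le_aux
      have hR0 : (0:ℝ) ≤ a * w / (s * v) := by positivity
      have hD : Real.sqrt K / max (Real.sqrt (tr - 1)) 1 +
          Real.sqrt (A₁ * Real.exp (-A₂ * (Tr - tr + 1)) + B₁ * Real.exp (-B₂ * tr) +
            C₁ * w * Real.exp (-C₂ * w)) ≤ 31 / 64 * (a * w / (s * v)) :=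
        hD_sum_aux hterm1 hterm2 hR0 hsqrt2
      -- sqrt of z t
      have hsqzt : Real.sqrt (z t) ≤ a * s / (v * w) := by
        have h1 : Real.sqrt (z t) ≤ Real.sqrt (N * tr / ((Tr - tr + 1) * Tr)) :=
          Real.sqrt_le_sqrt ihz
        have h2 : Real.sqrt (N * tr / ((Tr - tr + 1) * Tr)) = a * s / (v * w) := by
          rw [Real.sqrt_div (by positivity), Real.sqrt_mul hN0, Real.sqrt_mul huv0.le]
        linarith
      have hD0 : (0:ℝ) ≤ Real.sqrt K / max (Real.sqrt (tr - 1)) 1 +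
          Real.sqrt (A₁ * Real.exp (-A₂ * (Tr - tr + 1)) + B₁ * Real.exp (-B₂ * tr) +
            C₁ * w * Real.exp (-C₂ * w)) := by positivity
      -- assemble
      have hgoal : z (t+1) ≤ N * (tr + 1) / ((Tr - tr) * Tr) := by
        calc z (t+1) ≤ z t + 2 / (Tr - tr) * Real.sqrt (z t) *
              (Real.sqrt K / max (Real.sqrt (tr - 1)) 1 +
               Real.sqrt (A₁ * Real.exp (-A₂ * (Tr - tr + 1)) + B₁ * Real.exp (-B₂ * tr) +
                 C₁ * w * Real.exp (-C₂ * w))) + 16 / (Tr - tr) ^ 2 := hrec'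
          _ ≤ N * tr / ((Tr - tr + 1) * Tr) + 2 / (Tr - tr) * (a * s / (v * w)) *
              (31 / 64 * (a * w / (s * v))) + 16 / (Tr - tr) ^ 2 := by
              gcongr
          _ ≤ N * (tr + 1) / ((Tr - tr) * Tr) := by
              rw [prod_eq_aux hs0.ne' hv0.ne' hw0.ne' hu0.ne', haN, hv2]
              have h16 : 16 / (Tr - tr) ^ 2 ≤ N / 32 / ((Tr - tr) * (Tr - tr + 1)) :=
                h16_aux hu1 hN1024
              have hid : N * (tr + 1) / ((Tr - tr) * Tr) - N * tr / ((Tr - tr + 1) * Tr) -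
                  31 / 32 * N / ((Tr - tr) * (Tr - tr + 1)) -
                  N / 32 / ((Tr - tr) * (Tr - tr + 1)) =
                  N / ((Tr - tr) * (Tr - tr + 1) * Tr) := by
                field_simp
                ring
              have hpos : (0:ℝ) ≤ N / ((Tr - tr) * (Tr - tr + 1) * Tr) := by positivity
              linarith
      have hcast : ((t + 1 : ℕ) : ℝ) = tr + 1 := by push_cast; rfl
      rw [hcast, show Tr - (tr + 1) + 1 = Tr - tr by ring]
      exact hgoal
  -- summation
  have hzle : ∀ t ∈ Finset.Icc 1 T, z t ≤ N * (1 / ((T:ℝ) - t + 1)) := by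
    intro t htm
    rw [Finset.mem_Icc] at htm
    have h := key t htm.1 htm.2
    have htT : (t:ℝ) ≤ (T:ℝ) := by exact_mod_cast htm.2
    have ht1 : (1:ℝ) ≤ (t:ℝ) := by exact_mod_cast htm.1
    have hd : (0:ℝ) < (T:ℝ) - t + 1 := by linarith
    calc z t ≤ N * t / (((T:ℝ) - t + 1) * T) := h
      _ ≤ N * (1 / ((T:ℝ) - t + 1)) := hzle_aux hN0 ht1 htT hT0
  have hharm : ∑ s ∈ Finset.Icc 1 T, (1:ℝ) / s ≤ 1 + Real.log T := by
    have hh := harmonic_le_one_add_log T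
    have heq : ((harmonic T : ℚ) : ℝ) = ∑ s ∈ Finset.Icc 1 T, (1:ℝ) / s := by
      rw [harmonic_eq_sum_Icc]
      push_cast
      simp [one_div]
    rw [← heq]
    exact hh
  have hlog2 : (0.6931471803:ℝ) < Real.log 2 := Real.log_two_gt_d9
  have hlogT : Real.log 2 ≤ Real.log T := Real.log_le_log (by norm_num) hTr2
  calc ∑ t ∈ Finset.Icc 1 T, z t
      ≤ ∑ t ∈ Finset.Icc 1 T, N * (1 / ((T:ℝ) - t + 1)) := Finset.sum_le_sum hzle
    _ = N * ∑ t ∈ Finset.Icc 1 T, (1:ℝ) / ((T:ℝ) - t + 1) := by rw [Finset.mul_sum]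
    _ = N * ∑ s ∈ Finset.Icc 1 T, (1:ℝ) / s := by rw [sum_reindex_aux]
    _ ≤ N * (1 + Real.log T) := mul_le_mul_of_nonneg_left hharm hN0
    _ ≤ 3 * N * Real.log T := final_log_aux hN0 (by linarith)
end
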